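/- arXiv:2412.09663 — 13 statements merged into one kernel-verified Lean document; each statement's English description precedes it below -/
import Mathlib

section
/- For every α > 0 and every non-degenerate normalized class adjacency matrix C, h_unb^α(C) ≤ 1 + α, and equality h_unb^α(C) = 1 + α holds if and only if ∑_i c_ii = 1 (maximal agreement). -/
/-- A normalized class adjacency matrix: symmetric, nonnegative entries, entries sum to 1. -/
def IsNCAM {m : ℕ} (C : Matrix (Fin m) (Fin m) ℝ) : Prop :=
  (∀ i j, C i j = C j i) ∧ (∀ i j, 0 ≤ C i j) ∧ (∑ i : Fin m, ∑ j : Fin m, C i j = 1)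

/-- Non-degenerate: at least two nonzero entries. -/
def Nondeg {m : ℕ} (C : Matrix (Fin m) (Fin m) ℝ) : Prop :=
  ∃ p q : Fin m × Fin m, p ≠ q ∧ C p.1 p.2 ≠ 0 ∧ C q.1 q.2 ≠ 0

/-- Unbiased homophily (α = 0). -/
noncomputable def hUnb {m : ℕ} (C : Matrix (Fin m) (Fin m) ℝ) : ℝ :=
  (∑ i : Fin m, ∑ j : Fin m, if i < j then Real.sqrt (C i i * C j j) - C i j else 0) /
  (∑ i : Fin m, ∑ j : Fin m, if i < j then Real.sqrt (C i i * C j j) + C i j else 0)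

/-- Unbiased homophily with parameter α. -/
noncomputable def hUnbAlpha {m : ℕ} (α : ℝ) (C : Matrix (Fin m) (Fin m) ℝ) : ℝ :=
  hUnb C + α * min (∑ i : Fin m, Real.sqrt (C i i)) 1
/-- maximal agreement for h_unb^α. -/
theorem maximal_agreement {m : ℕ} (α : ℝ) (hα : 0 < α)
    (C : Matrix (Fin m) (Fin m) ℝ) (hC : IsNCAM C) (hnd : Nondeg C) :
    hUnbAlpha α C ≤ 1 + α ∧ (hUnbAlpha α C = 1 + α ↔ ∑ i : Fin m, C i i = 1) := by
  obtain ⟨hsym, hpos, hsum⟩ := hC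
  set T : ℝ := ∑ i : Fin m, ∑ j : Fin m, if i < j then Real.sqrt (C i i * C j j) else 0 with hT
  set S : ℝ := ∑ i : Fin m, ∑ j : Fin m, if i < j then C i j else 0 with hS
  have hT0 : 0 ≤ T := by
    apply Finset.sum_nonneg; intro i _; apply Finset.sum_nonneg; intro j _
    split
    · exact Real.sqrt_nonneg _
    · exact le_refl 0
  have hS0 : 0 ≤ S := by
    apply Finset.sum_nonneg; intro i _; apply Finset.sum_nonneg; intro j _
    split
    · exact hpos i j
    · exact le_refl 0
  have hNum : (∑ i : Fin m, ∑ j : Fin m,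
      if i < j then Real.sqrt (C i i * C j j) - C i j else 0) = T - S := by
    rw [hT, hS, ← Finset.sum_sub_distrib]
    refine Finset.sum_congr rfl fun i _ => ?_
    rw [← Finset.sum_sub_distrib]
    refine Finset.sum_congr rfl fun j _ => ?_
    split <;> simp
  have hDen : (∑ i : Fin m, ∑ j : Fin m,
      if i < j then Real.sqrt (C i i * C j j) + C i j else 0) = T + S := by
    rw [hT, hS, ← Finset.sum_add_distrib]
    refine Finset.sum_congr rfl fun i _ => ?_
    rw [← Finset.sum_add_distrib]
    refine Finset.sum_congr rfl fun j _ => ?_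
    split <;> simp
  have hUnbEq : hUnb C = (T - S) / (T + S) := by
    rw [hUnb, hNum, hDen]
  -- decomposition of the total sum
  have hdecomp : (∑ i : Fin m, ∑ j : Fin m, C i j) = (∑ i : Fin m, C i i) + 2 * S := by
    have h1 : ∀ i j : Fin m, C i j =
        (if i = j then C i j else 0) + (if i < j then C i j else 0) +
        (if j < i then C i j else 0) := by
      intro i j
      rcases lt_trichotomy i j with h | h | h
      · rw [if_neg h.ne, if_pos h, if_neg (asymm h)]; ring
      · subst h; simp
      · rw [if_neg h.ne', if_neg (asymm h), if_pos h]; ring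
    calc (∑ i : Fin m, ∑ j : Fin m, C i j)
        = (∑ i : Fin m, ∑ j : Fin m, ((if i = j then C i j else 0) +
            (if i < j then C i j else 0) + (if j < i then C i j else 0))) := by
          refine Finset.sum_congr rfl fun i _ => Finset.sum_congr rfl fun j _ => h1 i j
      _ = (∑ i : Fin m, ∑ j : Fin m, if i = j then C i j else 0) +
          (∑ i : Fin m, ∑ j : Fin m, if i < j then C i j else 0) +
          (∑ i : Fin m, ∑ j : Fin m, if j < i then C i j else 0) := by
          simp [Finset.sum_add_distrib]
      _ = (∑ i : Fin m, C i i) + S + S := by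
          congr 1
          · congr 1
            · refine Finset.sum_congr rfl fun i _ => ?_
              simp
          · rw [Finset.sum_comm]
            refine Finset.sum_congr rfl fun j _ => Finset.sum_congr rfl fun i _ => ?_
            rcases lt_or_ge j i with h | h
            · rw [if_pos h, if_pos h, hsym i j]
            · rw [if_neg (not_lt.2 h), if_neg (not_lt.2 h)]
      _ = (∑ i : Fin m, C i i) + 2 * S := by ring
  have hdiag : (∑ i : Fin m, C i i) = 1 - 2 * S := by
    rw [hsum] at hdecomp; linarith
  -- hUnb ≤ 1
  have hUnb_le : hUnb C ≤ 1 := by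
    rw [hUnbEq]
    rcases eq_or_lt_of_le (by linarith : (0:ℝ) ≤ T + S) with h | h
    · rw [← h, div_zero]; norm_num
    · rw [div_le_one h]; linarith
  have hmin_le : min (∑ i : Fin m, Real.sqrt (C i i)) 1 ≤ 1 := min_le_right _ _
  have hle : hUnbAlpha α C ≤ 1 + α := by
    rw [hUnbAlpha]
    have := mul_le_mul_of_nonneg_left hmin_le hα.le
    linarith
  refine ⟨hle, ?_, ?_⟩
  · -- forward: equality implies ∑ c_ii = 1
    intro heq
    rw [hUnbAlpha] at heq
    have hmul := mul_le_mul_of_nonneg_left hmin_le hα.le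
    have hUnb1 : hUnb C = 1 := by linarith
    rw [hUnbEq] at hUnb1
    have hTS : T + S ≠ 0 := by
      intro h
      rw [h, div_zero] at hUnb1
      norm_num at hUnb1
    rw [div_eq_one_iff_eq hTS] at hUnb1
    have hSzero : S = 0 := by linarith
    rw [hdiag, hSzero]; ring
  · -- backward: ∑ c_ii = 1 implies equality
    intro hd
    have hSzero : S = 0 := by rw [hd] at hdiag; linarith
    -- all strictly-upper entries are zero
    have hoff : ∀ i j : Fin m, i < j → C i j = 0 := by
      intro i j hij
      have h1 : ∀ i ∈ (Finset.univ : Finset (Fin m)),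
          0 ≤ ∑ j : Fin m, if i < j then C i j else 0 := by
        intro i _
        apply Finset.sum_nonneg; intro j _
        split
        · exact hpos i j
        · exact le_refl 0
      have h3 : (∑ j : Fin m, if i < j then C i j else 0) = 0 :=
        (Finset.sum_eq_zero_iff_of_nonneg h1).mp hSzero i (Finset.mem_univ i)
      have h4 : ∀ j ∈ (Finset.univ : Finset (Fin m)),
          0 ≤ if i < j then C i j else 0 := by
        intro j _
        split
        · exact hpos i j
        · exact le_refl 0
      have h5 := (Finset.sum_eq_zero_iff_of_nonneg h4).mp h3 j (Finset.mem_univ j)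
      rwa [if_pos hij] at h5
    -- nondegeneracy gives two distinct nonzero diagonal entries
    obtain ⟨p, q, hpq, hp, hq⟩ := hnd
    have hdiagp : ∀ r : Fin m × Fin m, C r.1 r.2 ≠ 0 → r.1 = r.2 := by
      intro r hr
      by_contra h
      rcases lt_or_gt_of_ne h with hlt | hgt
      · exact hr (hoff _ _ hlt)
      · exact hr (by rw [hsym]; exact hoff _ _ hgt)
    have hp1 := hdiagp p hp
    have hq1 := hdiagp q hq
    have hne : p.1 ≠ q.1 := by
      intro h
      apply hpq
      exact Prod.ext h (by rw [← hp1, ← hq1, h])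
    -- get i < j with nonzero diagonal entries
    obtain ⟨i, j, hij, hi, hj⟩ : ∃ i j : Fin m, i < j ∧ C i i ≠ 0 ∧ C j j ≠ 0 := by
      rcases lt_or_gt_of_ne hne with h | h
      · exact ⟨p.1, q.1, h, by rw [hp1] at hp ⊢; exact hp, by rw [hq1] at hq ⊢; exact hq⟩
      · exact ⟨q.1, p.1, h, by rw [hq1] at hq ⊢; exact hq, by rw [hp1] at hp ⊢; exact hp⟩
    have hipos : 0 < C i i := lt_of_le_of_ne (hpos i i) (Ne.symm hi)
    have hjpos : 0 < C j j := lt_of_le_of_ne (hpos j j) (Ne.symm hj)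
    have hTpos : 0 < T := by
      have hterm : 0 < Real.sqrt (C i i * C j j) :=
        Real.sqrt_pos.mpr (mul_pos hipos hjpos)
      have hinner : Real.sqrt (C i i * C j j) ≤
          ∑ k : Fin m, if i < k then Real.sqrt (C i i * C k k) else 0 := by
        have := Finset.single_le_sum (f := fun k => if i < k then Real.sqrt (C i i * C k k) else 0)
          (fun k _ => by split; exacts [Real.sqrt_nonneg _, le_refl 0])
          (Finset.mem_univ j)
        simpa [if_pos hij] using this
      have houter : (∑ k : Fin m, if i < k then Real.sqrt (C i i * C k k) else 0) ≤ T := by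
        rw [hT]
        exact Finset.single_le_sum
          (f := fun i => ∑ k : Fin m, if i < k then Real.sqrt (C i i * C k k) else 0)
          (fun i _ => Finset.sum_nonneg fun k _ => by
            split; exacts [Real.sqrt_nonneg _, le_refl 0]) (Finset.mem_univ i)
      linarith
    have hUnb1 : hUnb C = 1 := by
      rw [hUnbEq, hSzero, sub_zero, add_zero, div_self hTpos.ne']
    -- min part equals 1
    have hCle1 : ∀ k : Fin m, C k k ≤ 1 := by
      intro k
      rw [← hd]
      exact Finset.single_le_sum (f := fun k => C k k) (fun k _ => hpos k k)
        (Finset.mem_univ k)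
    have hsqrt_ge : ∀ k : Fin m, C k k ≤ Real.sqrt (C k k) := by
      intro k
      nlinarith [Real.sq_sqrt (hpos k k), Real.sqrt_nonneg (C k k), hCle1 k,
        hpos k k]
    have hsum_sqrt : 1 ≤ ∑ k : Fin m, Real.sqrt (C k k) := by
      calc (1:ℝ) = ∑ k : Fin m, C k k := hd.symm
        _ ≤ ∑ k : Fin m, Real.sqrt (C k k) := Finset.sum_le_sum fun k _ => hsqrt_ge k
    have hmin1 : min (∑ k : Fin m, Real.sqrt (C k k)) 1 = 1 := min_eq_right hsum_sqrt
    rw [hUnbAlpha, hUnb1, hmin1, mul_one]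
end

section
/- For every α > 0 and every non-degenerate normalized class adjacency matrix C, h_unb^α(C) ≥ −1, and equality h_unb^α(C) = −1 holds if and only if ∑_i c_ii = 0 (minimal agreement). -/
/-- minimal agreement for h_unb^α. -/
theorem minimal_agreement {m : ℕ} (α : ℝ) (hα : 0 < α)
    (C : Matrix (Fin m) (Fin m) ℝ) (hC : IsNCAM C) (hnd : Nondeg C) :
    -1 ≤ hUnbAlpha α C ∧ (hUnbAlpha α C = -1 ↔ ∑ i : Fin m, C i i = 0) := by
  obtain ⟨hsym, hnn, hsum⟩ := hC
  set D := ∑ i : Fin m, ∑ j : Fin m, if i < j then Real.sqrt (C i i * C j j) else 0 with hD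
  set S := ∑ i : Fin m, ∑ j : Fin m, if i < j then C i j else 0 with hS
  have hsplit : ∀ (op : ℝ → ℝ → ℝ), (∀ a b, op a b = a + op 0 1 * b) →
      (∑ i : Fin m, ∑ j : Fin m, if i < j then op (Real.sqrt (C i i * C j j)) (C i j) else 0)
      = D + op 0 1 * S := by
    intro op hop
    rw [hD, hS, Finset.mul_sum, ← Finset.sum_add_distrib]
    refine Finset.sum_congr rfl fun i _ => ?_
    rw [Finset.mul_sum, ← Finset.sum_add_distrib]
    refine Finset.sum_congr rfl fun j _ => ?_
    split
    · exact hop _ _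
    · ring
  have hnum : (∑ i : Fin m, ∑ j : Fin m, if i < j then Real.sqrt (C i i * C j j) - C i j else 0)
      = D - S := by
    have := hsplit (fun a b => a - b) (fun a b => by ring)
    simpa [sub_eq_add_neg] using this
  have hden : (∑ i : Fin m, ∑ j : Fin m, if i < j then Real.sqrt (C i i * C j j) + C i j else 0)
      = D + S := by
    have := hsplit (fun a b => a + b) (fun a b => by ring)
    simpa using this
  have hEq : hUnb C = (D - S) / (D + S) := by rw [hUnb, hnum, hden]
  have hDnn : 0 ≤ D := Finset.sum_nonneg fun i _ => Finset.sum_nonneg fun j _ => by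
    split
    · exact Real.sqrt_nonneg _
    · exact le_rfl
  have hSnn : 0 ≤ S := Finset.sum_nonneg fun i _ => Finset.sum_nonneg fun j _ => by
    split
    · exact hnn i j
    · exact le_rfl
  have key : ∑ i : Fin m, ∑ j : Fin m, C i j = (∑ i : Fin m, C i i) + S + S := by
    have h1 : ∀ i j : Fin m, C i j =
        (if i = j then C i j else 0) + (if i < j then C i j else 0)
          + (if j < i then C i j else 0) := by
      intro i j
      rcases lt_trichotomy i j with h | h | h
      · simp [h, h.ne, asymm h]
      · simp [h, lt_irrefl]
      · simp [h, h.ne', asymm h]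
    calc ∑ i : Fin m, ∑ j : Fin m, C i j
        = ∑ i : Fin m, ∑ j : Fin m, ((if i = j then C i j else 0)
            + (if i < j then C i j else 0) + (if j < i then C i j else 0)) := by
          refine Finset.sum_congr rfl fun i _ => Finset.sum_congr rfl fun j _ => h1 i j
      _ = (∑ i : Fin m, ∑ j : Fin m, if i = j then C i j else 0) + S
            + (∑ i : Fin m, ∑ j : Fin m, if j < i then C i j else 0) := by
          simp [Finset.sum_add_distrib, hS]
      _ = (∑ i : Fin m, C i i) + S + S := by
          congr 1
          · congr 1
            refine Finset.sum_congr rfl fun i _ => ?_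
            simp
          · rw [Finset.sum_comm, hS]
            refine Finset.sum_congr rfl fun i _ => Finset.sum_congr rfl fun j _ => ?_
            split <;> simp [hsym]
  have hub : -1 ≤ hUnb C := by
    rw [hEq]
    rcases eq_or_lt_of_le (by positivity : (0:ℝ) ≤ D + S) with h | h
    · rw [← h, div_zero]; norm_num
    · rw [le_div_iff₀ h]
      nlinarith
  by_cases htr : ∑ i : Fin m, C i i = 0
  · have hdiag : ∀ i : Fin m, C i i = 0 := by
      intro i
      exact (Finset.sum_eq_zero_iff_of_nonneg (fun i _ => hnn i i)).mp htr i (Finset.mem_univ i)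
    have hSval : S = 1 / 2 := by
      rw [hsum, htr] at key; linarith
    have hDval : D = 0 := by
      rw [hD]
      refine Finset.sum_eq_zero fun i _ => Finset.sum_eq_zero fun j _ => ?_
      split <;> simp [hdiag]
    have hv : hUnbAlpha α C = -1 := by
      rw [hUnbAlpha, hEq, hDval, hSval]
      have : (∑ i : Fin m, Real.sqrt (C i i)) = 0 := by simp [hdiag]
      rw [this]
      norm_num
    exact ⟨hv.ge, ⟨fun _ => htr, fun _ => hv⟩⟩
  · have htrpos : 0 < ∑ i : Fin m, C i i :=
      lt_of_le_of_ne (Finset.sum_nonneg fun i _ => hnn i i) (Ne.symm htr)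
    obtain ⟨k, hk⟩ : ∃ k, 0 < C k k := by
      by_contra h; push_neg at h
      exact htr (Finset.sum_eq_zero fun i _ => le_antisymm (h i) (hnn i i))
    have hsq : 0 < ∑ i : Fin m, Real.sqrt (C i i) :=
      Finset.sum_pos' (fun i _ => Real.sqrt_nonneg _)
        ⟨k, Finset.mem_univ k, Real.sqrt_pos.mpr hk⟩
    have hmin : 0 < min (∑ i : Fin m, Real.sqrt (C i i)) 1 := lt_min hsq one_pos
    have hgt : -1 < hUnbAlpha α C := by
      rw [hUnbAlpha]
      nlinarith [mul_pos hα hmin]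
    exact ⟨hgt.le, ⟨fun h => absurd h hgt.ne', fun h => absurd h htr⟩⟩
end

section
/- For every α > 0 and every non-degenerate normalized class adjacency matrix C, the matrix rand(C) with entries rand(C)_{ij} = a_i·a_j (where a_i = ∑_k c_ik) is itself a non-degenerate normalized class adjacency matrix and satisfies h_unb^α(rand(C)) = α (constant baseline). -/
/-- rand(C) for undirected graphs: rand(C)_{ij} = a_i · a_j where a_i = ∑_k c_{ik}. -/
noncomputable def randM {m : ℕ} (C : Matrix (Fin m) (Fin m) ℝ) : Matrix (Fin m) (Fin m) ℝ :=
  Matrix.of fun i j => (∑ k : Fin m, C i k) * (∑ k : Fin m, C j k)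

open Matrix

section VecMulVecSelf

variable {m : ℕ} (a : Fin m → ℝ)

lemma isNCAM_vecMulVec_self (ha : ∀ i, 0 ≤ a i) (hsum : ∑ i, a i = 1) :
    IsNCAM (vecMulVec a a) := by
  refine ⟨fun i j => by simp only [vecMulVec_apply, mul_comm],
    fun i j => mul_nonneg (ha i) (ha j), ?_⟩
  simp only [vecMulVec_apply, ← Finset.sum_mul_sum, hsum, mul_one]

lemma nondeg_vecMulVec_self {i j : Fin m} (hij : i ≠ j) (hi : a i ≠ 0) (hj : a j ≠ 0) :
    Nondeg (vecMulVec a a) :=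
  ⟨(i, i), (j, j), fun h => hij (Prod.ext_iff.mp h).1,
    by simpa [vecMulVec_apply] using hi, by simpa [vecMulVec_apply] using hj⟩

lemma sqrt_diag_mul_diag_vecMulVec_self (ha : ∀ i, 0 ≤ a i) (i j : Fin m) :
    Real.sqrt (vecMulVec a a i i * vecMulVec a a j j) = vecMulVec a a i j := by
  simp only [vecMulVec_apply]
  rw [mul_mul_mul_comm, Real.sqrt_mul_self (mul_nonneg (ha i) (ha j))]

lemma hUnb_vecMulVec_self (ha : ∀ i, 0 ≤ a i) : hUnb (vecMulVec a a) = 0 := by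
  unfold hUnb
  simp only [sqrt_diag_mul_diag_vecMulVec_self a ha, sub_self, ite_self,
    Finset.sum_const_zero, zero_div]

lemma sum_sqrt_diag_vecMulVec_self (ha : ∀ i, 0 ≤ a i) :
    ∑ i, Real.sqrt (vecMulVec a a i i) = ∑ i, a i := by
  simp only [vecMulVec_apply, Real.sqrt_mul_self (ha _)]

lemma hUnbAlpha_vecMulVec_self (α : ℝ) (ha : ∀ i, 0 ≤ a i) (hsum : ∑ i, a i = 1) :
    hUnbAlpha α (vecMulVec a a) = α := by
  rw [hUnbAlpha, hUnb_vecMulVec_self a ha, sum_sqrt_diag_vecMulVec_self a ha, hsum, min_self,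
    zero_add, mul_one]

end VecMulVecSelf

lemma randM_eq_vecMulVec {m : ℕ} (C : Matrix (Fin m) (Fin m) ℝ) :
    randM C = vecMulVec (fun i => ∑ k, C i k) (fun i => ∑ k, C i k) :=
  rfl

namespace IsNCAM

variable {m : ℕ} {C : Matrix (Fin m) (Fin m) ℝ}

lemma rowSum_nonneg (hC : IsNCAM C) (i : Fin m) : 0 ≤ ∑ k, C i k :=
  Finset.sum_nonneg fun k _ => hC.2.1 i k

lemma rowSum_pos_of_ne_zero (hC : IsNCAM C) {i j : Fin m} (h : C i j ≠ 0) :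
    0 < ∑ k, C i k :=
  lt_of_lt_of_le (lt_of_le_of_ne (hC.2.1 i j) h.symm)
    (Finset.single_le_sum (fun k _ => hC.2.1 i k) (Finset.mem_univ j))

lemma exists_ne_rowSum_ne_zero (hC : IsNCAM C) (hnd : Nondeg C) :
    ∃ i j : Fin m, i ≠ j ∧ ∑ k, C i k ≠ 0 ∧ ∑ k, C j k ≠ 0 := by
  obtain ⟨⟨i, j⟩, ⟨i', j'⟩, hpq, hp, hq⟩ := hnd
  by_cases hi : i = i'
  · have hj : j ≠ j' := fun hj => hpq (Prod.ext hi hj)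
    rw [hC.1] at hp hq
    exact ⟨j, j', hj, (hC.rowSum_pos_of_ne_zero hp).ne', (hC.rowSum_pos_of_ne_zero hq).ne'⟩
  · exact ⟨i, i', hi, (hC.rowSum_pos_of_ne_zero hp).ne', (hC.rowSum_pos_of_ne_zero hq).ne'⟩

end IsNCAM

theorem constant_baseline_general {m : ℕ} (α : ℝ)
    (C : Matrix (Fin m) (Fin m) ℝ) (hC : IsNCAM C) (hnd : Nondeg C) :
    IsNCAM (randM C) ∧ Nondeg (randM C) ∧ hUnbAlpha α (randM C) = α := by
  obtain ⟨i, j, hij, hi, hj⟩ := hC.exists_ne_rowSum_ne_zero hnd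
  rw [randM_eq_vecMulVec]
  exact ⟨isNCAM_vecMulVec_self _ hC.rowSum_nonneg hC.2.2, nondeg_vecMulVec_self _ hij hi hj,
    hUnbAlpha_vecMulVec_self _ α hC.rowSum_nonneg hC.2.2⟩

/-- constant baseline for h_unb^α. -/
theorem constant_baseline {m : ℕ} (α : ℝ) (hα : 0 < α)
    (C : Matrix (Fin m) (Fin m) ℝ) (hC : IsNCAM C) (hnd : Nondeg C) :
    IsNCAM (randM C) ∧ Nondeg (randM C) ∧ hUnbAlpha α (randM C) = α :=
  constant_baseline_general α C hC hnd
end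

section
/- For every α > 0, every non-degenerate normalized class adjacency matrix C with ∑_i c_ii < 1, every index i, and every ε with 0 < ε < 1, one has h_unb^α((1−ε)·C + ε·E_ii) > h_unb^α(C) (homo-monotonicity: adding homophilic edges strictly increases the measure). -/
private lemma dsum_ite_sub {m : ℕ} (f g : Fin m → Fin m → ℝ) :
    (∑ k : Fin m, ∑ l : Fin m, if k < l then f k l - g k l else 0)
      = (∑ k : Fin m, ∑ l : Fin m, if k < l then f k l else 0)
        - (∑ k : Fin m, ∑ l : Fin m, if k < l then g k l else 0) := by
  rw [← Finset.sum_sub_distrib]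
  refine Finset.sum_congr rfl fun k _ => ?_
  rw [← Finset.sum_sub_distrib]
  refine Finset.sum_congr rfl fun l _ => ?_
  split <;> simp

private lemma dsum_ite_add {m : ℕ} (f g : Fin m → Fin m → ℝ) :
    (∑ k : Fin m, ∑ l : Fin m, if k < l then f k l + g k l else 0)
      = (∑ k : Fin m, ∑ l : Fin m, if k < l then f k l else 0)
        + (∑ k : Fin m, ∑ l : Fin m, if k < l then g k l else 0) := by
  rw [← Finset.sum_add_distrib]
  refine Finset.sum_congr rfl fun k _ => ?_
  rw [← Finset.sum_add_distrib]
  refine Finset.sum_congr rfl fun l _ => ?_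
  split <;> simp

private lemma dsum_le {m : ℕ} {f g : Fin m → Fin m → ℝ} (h : ∀ k l, f k l ≤ g k l) :
    (∑ k : Fin m, ∑ l : Fin m, f k l) ≤ ∑ k : Fin m, ∑ l : Fin m, g k l :=
  Finset.sum_le_sum fun k _ => Finset.sum_le_sum fun l _ => h k l

private lemma dsum_lt {m : ℕ} {f g : Fin m → Fin m → ℝ} (h : ∀ k l, f k l ≤ g k l)
    (k₀ l₀ : Fin m) (hs : f k₀ l₀ < g k₀ l₀) :
    (∑ k : Fin m, ∑ l : Fin m, f k l) < ∑ k : Fin m, ∑ l : Fin m, g k l :=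
  Finset.sum_lt_sum (fun k _ => Finset.sum_le_sum fun l _ => h k l)
    ⟨k₀, Finset.mem_univ _, Finset.sum_lt_sum (fun l _ => h k₀ l) ⟨l₀, Finset.mem_univ _, hs⟩⟩

private lemma dsum_pos {m : ℕ} {f : Fin m → Fin m → ℝ} (h : ∀ k l, 0 ≤ f k l)
    (k₀ l₀ : Fin m) (hs : 0 < f k₀ l₀) :
    0 < ∑ k : Fin m, ∑ l : Fin m, f k l := by
  have := dsum_lt (f := fun _ _ => (0 : ℝ)) (g := f) h k₀ l₀ hs
  simpa using this

private lemma sqrt_le_scale {a x : ℝ} (ha0 : 0 ≤ a) (ha1 : a ≤ 1) (hx : 0 ≤ x) :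
    a * Real.sqrt x ≤ Real.sqrt (a * x) := by
  rw [Real.sqrt_mul ha0]
  have h1 : a ≤ Real.sqrt a := by
    rw [Real.le_sqrt ha0 ha0]; nlinarith
  exact mul_le_mul_of_nonneg_right h1 (Real.sqrt_nonneg x)

private lemma sqrt_concave_aux {a c : ℝ} (ha0 : 0 ≤ a) (ha1 : a ≤ 1) (hc : 0 ≤ c) :
    a * Real.sqrt c + (1 - a) ≤ Real.sqrt (a * c + (1 - a)) := by
  have hs := Real.sqrt_nonneg c
  have hsq := Real.sq_sqrt hc
  rw [Real.le_sqrt (by nlinarith) (by nlinarith)]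
  nlinarith [sq_nonneg (Real.sqrt c - 1), mul_nonneg ha0 (sub_nonneg.2 ha1)]

private lemma sqrt_mul_scale {a x y x' y' : ℝ} (ha0 : 0 ≤ a) (hx : 0 ≤ x) (hy : 0 ≤ y)
    (hx' : a * x ≤ x') (hy' : a * y ≤ y') :
    a * Real.sqrt (x * y) ≤ Real.sqrt (x' * y') := by
  have h1 : a * Real.sqrt (x * y) = Real.sqrt (a ^ 2 * (x * y)) := by
    rw [Real.sqrt_mul (sq_nonneg a), Real.sqrt_sq ha0]
  rw [h1]
  apply Real.sqrt_le_sqrt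
  have hax : 0 ≤ a * x := mul_nonneg ha0 hx
  have hay : 0 ≤ a * y := mul_nonneg ha0 hy
  nlinarith [mul_le_mul hx' hy' hay (le_trans hax hx')]

private lemma sqrt_mul_scale_lt {a x y x' y' : ℝ} (ha0 : 0 ≤ a) (hx : 0 < x) (hy : 0 ≤ y)
    (hx' : a * x ≤ x') (hy' : a * y < y') (hx'0 : 0 < x') :
    a * Real.sqrt (x * y) < Real.sqrt (x' * y') := by
  have h1 : a * Real.sqrt (x * y) = Real.sqrt (a ^ 2 * (x * y)) := by
    rw [Real.sqrt_mul (sq_nonneg a), Real.sqrt_sq ha0]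
  rw [h1]
  apply Real.sqrt_lt_sqrt (by positivity)
  have hax : 0 ≤ a * x := mul_nonneg ha0 hx.le
  have hay : 0 ≤ a * y := mul_nonneg ha0 hy
  nlinarith

set_option maxHeartbeats 1000000 in
/-- homo-monotonicity of h_unb^α. -/
theorem homo_monotonicity {m : ℕ} (α : ℝ) (hα : 0 < α)
    (C : Matrix (Fin m) (Fin m) ℝ) (hC : IsNCAM C) (hnd : Nondeg C)
    (hdiag : ∑ i : Fin m, C i i < 1) (i : Fin m) (ε : ℝ) (hε0 : 0 < ε) (hε1 : ε < 1) :
    hUnbAlpha α ((1 - ε) • C + ε • Matrix.single i i (1 : ℝ)) > hUnbAlpha α C := by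
  obtain ⟨hsym, hnn, hsum⟩ := hC
  have hεle : (0 : ℝ) ≤ 1 - ε := by linarith
  have hεpos : (0 : ℝ) < 1 - ε := by linarith
  set C' := (1 - ε) • C + ε • Matrix.single i i (1 : ℝ) with hC'def
  have happ : ∀ k l : Fin m, C' k l = (1 - ε) * C k l + (if k = i ∧ l = i then ε else 0) := by
    intro k l
    simp only [hC'def, Matrix.add_apply, Matrix.smul_apply, smul_eq_mul,
      Matrix.single, Matrix.of_apply]
    by_cases hk : k = i <;> by_cases hl : l = i <;> simp [hk, hl] <;> tauto
  have hdg : ∀ k : Fin m, C' k k = (1 - ε) * C k k + (if k = i then ε else 0) := by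
    intro k; rw [happ]; simp
  have hoff : ∀ k l : Fin m, k ≠ l → C' k l = (1 - ε) * C k l := by
    intro k l hkl; rw [happ]
    have hni : ¬(k = i ∧ l = i) := fun ⟨h1, h2⟩ => hkl (h1.trans h2.symm)
    simp [hni]
  have hdg'ge : ∀ k : Fin m, (1 - ε) * C k k ≤ C' k k := by
    intro k; rw [hdg]; split <;> linarith
  have hdg'nn : ∀ k : Fin m, 0 ≤ C' k k :=
    fun k => le_trans (mul_nonneg hεle (hnn k k)) (hdg'ge k)
  unfold hUnbAlpha
  set S := ∑ k : Fin m, Real.sqrt (C k k) with hSdef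
  set S' := ∑ k : Fin m, Real.sqrt (C' k k) with hS'def
  set G := ∑ k : Fin m, ∑ l : Fin m, (if k < l then Real.sqrt (C k k * C l l) else 0) with hGdef
  set P := ∑ k : Fin m, ∑ l : Fin m, (if k < l then C k l else 0) with hPdef
  set G' := ∑ k : Fin m, ∑ l : Fin m, (if k < l then Real.sqrt (C' k k * C' l l) else 0)
    with hG'def2
  have hGnn : 0 ≤ G := by
    rw [hGdef]
    exact Finset.sum_nonneg fun k _ => Finset.sum_nonneg fun l _ => by
      split
      · exact Real.sqrt_nonneg _
      · exact le_refl 0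
  have hPnn : 0 ≤ P := by
    rw [hPdef]
    exact Finset.sum_nonneg fun k _ => Finset.sum_nonneg fun l _ => by
      split
      · exact hnn _ _
      · exact le_refl 0
  have hmulG : (1 - ε) * G
      = ∑ k : Fin m, ∑ l : Fin m, (if k < l then (1 - ε) * Real.sqrt (C k k * C l l) else 0) := by
    rw [hGdef, Finset.mul_sum]
    refine Finset.sum_congr rfl fun k _ => ?_
    rw [Finset.mul_sum]
    exact Finset.sum_congr rfl fun l _ => by split <;> simp
  have hmulP : (1 - ε) * P
      = ∑ k : Fin m, ∑ l : Fin m, (if k < l then (1 - ε) * C k l else 0) := by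
    rw [hPdef, Finset.mul_sum]
    refine Finset.sum_congr rfl fun k _ => ?_
    rw [Finset.mul_sum]
    exact Finset.sum_congr rfl fun l _ => by split <;> simp
  have hG'ge : (1 - ε) * G ≤ G' := by
    rw [hmulG, hG'def2]
    refine dsum_le fun k l => ?_
    by_cases h : k < l
    · simp only [if_pos h]
      exact sqrt_mul_scale hεle (hnn k k) (hnn l l) (hdg'ge k) (hdg'ge l)
    · simp [h]
  have hP' : (∑ k : Fin m, ∑ l : Fin m, if k < l then C' k l else 0) = (1 - ε) * P := by
    rw [hmulP]
    refine Finset.sum_congr rfl fun k _ => Finset.sum_congr rfl fun l _ => ?_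
    by_cases h : k < l
    · rw [if_pos h, if_pos h, hoff k l (ne_of_lt h)]
    · rw [if_neg h, if_neg h]
  have hUC : hUnb C = (G - P) / (G + P) := by
    unfold hUnb
    rw [dsum_ite_sub (fun k l => Real.sqrt (C k k * C l l)) (fun k l => C k l),
      dsum_ite_add (fun k l => Real.sqrt (C k k * C l l)) (fun k l => C k l), ← hGdef, ← hPdef]
  have hUC' : hUnb C' = (G' - (1 - ε) * P) / (G' + (1 - ε) * P) := by
    unfold hUnb
    rw [dsum_ite_sub (fun k l => Real.sqrt (C' k k * C' l l)) (fun k l => C' k l),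
      dsum_ite_add (fun k l => Real.sqrt (C' k k * C' l l)) (fun k l => C' k l), hP', ← hG'def2]
  -- positivity of the denominator for C
  have hoffP : ∀ k l : Fin m, k ≠ l → C k l ≠ 0 → 0 < P := by
    intro k l hkl hne
    have hpos : 0 < C k l := lt_of_le_of_ne (hnn k l) (Ne.symm hne)
    have hnng : ∀ a b : Fin m, 0 ≤ (if a < b then C a b else 0) := by
      intro a b; split
      · exact hnn a b
      · exact le_refl 0
    rw [hPdef]
    rcases lt_or_gt_of_ne hkl with h | h
    · exact dsum_pos hnng k l (by rw [if_pos h]; exact hpos)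
    · exact dsum_pos hnng l k (by rw [if_pos h, hsym l k]; exact hpos)
  have hDpos : 0 < G + P := by
    obtain ⟨p, q, hpq, hp, hq⟩ := hnd
    by_cases h1 : p.1 = p.2
    · by_cases h2 : q.1 = q.2
      · have hab : p.1 ≠ q.1 := by
          intro h
          exact hpq (Prod.ext h (by rw [← h1, ← h2, h]))
        have hpa : 0 < C p.1 p.1 := by
          have := lt_of_le_of_ne (hnn p.1 p.2) (Ne.symm hp)
          rwa [← h1] at this
        have hqa : 0 < C q.1 q.1 := by
          have := lt_of_le_of_ne (hnn q.1 q.2) (Ne.symm hq)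
          rwa [← h2] at this
        have hnng : ∀ a b : Fin m, 0 ≤ (if a < b then Real.sqrt (C a a * C b b) else 0) := by
          intro a b; split
          · exact Real.sqrt_nonneg _
          · exact le_refl 0
        have hGpos : 0 < G := by
          rw [hGdef]
          rcases lt_or_gt_of_ne hab with h | h
          · exact dsum_pos hnng p.1 q.1
              (by rw [if_pos h]; exact Real.sqrt_pos.2 (mul_pos hpa hqa))
          · exact dsum_pos hnng q.1 p.1
              (by rw [if_pos h]; exact Real.sqrt_pos.2 (mul_pos hqa hpa))
        linarith
      · have := hoffP q.1 q.2 h2 hq; linarith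
    · have := hoffP p.1 p.2 h1 hp; linarith
  have hD'pos : 0 < G' + (1 - ε) * P := by nlinarith
  -- weak monotonicity of hUnb
  have hle : hUnb C ≤ hUnb C' := by
    rw [hUC, hUC', div_le_div_iff₀ hDpos hD'pos]
    nlinarith [mul_nonneg hPnn (sub_nonneg.2 hG'ge)]
  -- lower bound on S'
  have hS'ge : (1 - ε) * S + ε ≤ S' := by
    have hterm : ∀ k : Fin m,
        (1 - ε) * Real.sqrt (C k k) + (if k = i then ε else 0) ≤ Real.sqrt (C' k k) := by
      intro k
      rw [hdg k]
      by_cases hk : k = i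
      · simp only [if_pos hk]
        have h := sqrt_concave_aux (a := 1 - ε) hεle (by linarith) (hnn k k)
        have he : 1 - (1 - ε) = ε := by ring
        rw [he] at h
        exact h
      · simp only [if_neg hk, add_zero]
        exact sqrt_le_scale hεle (by linarith) (hnn k k)
    calc (1 - ε) * S + ε
        = ∑ k : Fin m, ((1 - ε) * Real.sqrt (C k k) + (if k = i then ε else 0)) := by
          rw [Finset.sum_add_distrib, ← Finset.mul_sum, ← hSdef]
          simp
      _ ≤ S' := by
          rw [hS'def]
          exact Finset.sum_le_sum fun k _ => hterm k
  rcases lt_or_ge S 1 with hS1 | hS1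
  · -- S < 1 : the α-term strictly increases
    have hmin : min S 1 = S := min_eq_left hS1.le
    have h2 : (1 - ε) * S + ε ≤ min S' 1 := le_min hS'ge (by nlinarith)
    have h3 : S < (1 - ε) * S + ε := by nlinarith
    have hstep : S < min S' 1 := lt_of_lt_of_le h3 h2
    have := mul_lt_mul_of_pos_left hstep hα
    rw [hmin]
    linarith
  · -- 1 ≤ S : the min terms are both 1 and hUnb strictly increases
    have hmin1 : min S 1 = 1 := min_eq_right hS1
    have hS'1 : 1 ≤ S' := by nlinarith
    have hmin2 : min S' 1 = 1 := min_eq_right hS'1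
    -- some off-diagonal entry is positive
    have hex : ∃ k l : Fin m, k ≠ l ∧ 0 < C k l := by
      by_contra h
      push_neg at h
      have hzero : ∀ k l : Fin m, k ≠ l → C k l = 0 :=
        fun k l hkl => le_antisymm (h k l hkl) (hnn k l)
      have heq : ∑ k : Fin m, ∑ l : Fin m, C k l = ∑ k : Fin m, C k k := by
        refine Finset.sum_congr rfl fun k _ => ?_
        exact Finset.sum_eq_single k (fun l _ hlk => hzero k l (Ne.symm hlk)) (by simp)
      rw [heq] at hsum
      linarith
    obtain ⟨k, l, hkl, hklpos⟩ := hex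
    have hPpos : 0 < P := hoffP k l hkl (ne_of_gt hklpos)
    -- some other diagonal entry is positive
    have hj : ∃ j : Fin m, j ≠ i ∧ 0 < C j j := by
      by_contra h
      push_neg at h
      have hz : ∀ j : Fin m, j ≠ i → C j j = 0 :=
        fun j hji => le_antisymm (h j hji) (hnn j j)
      have hSeq : S = Real.sqrt (C i i) := by
        rw [hSdef]
        exact Finset.sum_eq_single i
          (fun j _ hji => by rw [hz j hji, Real.sqrt_zero]) (by simp)
      have hdiageq : (∑ k : Fin m, C k k) = C i i :=
        Finset.sum_eq_single i (fun j _ hji => hz j hji) (by simp)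
      rw [hSeq] at hS1
      have h1 : 1 ≤ C i i := by nlinarith [Real.sq_sqrt (hnn i i)]
      rw [hdiageq] at hdiag
      linarith
    obtain ⟨j, hji, hjpos⟩ := hj
    have hCii' : (1 - ε) * C i i < C' i i := by
      rw [hdg i, if_pos rfl]; linarith
    have hCjj' : C' j j = (1 - ε) * C j j := by
      rw [hdg j, if_neg hji, add_zero]
    have hG'lt : (1 - ε) * G < G' := by
      rw [hmulG, hG'def2]
      have hnle : ∀ a b : Fin m,
          (if a < b then (1 - ε) * Real.sqrt (C a a * C b b) else 0)
            ≤ (if a < b then Real.sqrt (C' a a * C' b b) else 0) := by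
        intro a b
        by_cases h : a < b
        · simp only [if_pos h]
          exact sqrt_mul_scale hεle (hnn a a) (hnn b b) (hdg'ge a) (hdg'ge b)
        · simp [h]
      rcases lt_or_gt_of_ne hji with h | h
      · refine dsum_lt hnle j i ?_
        rw [if_pos h, if_pos h]
        exact sqrt_mul_scale_lt hεle hjpos (hnn i i)
          (le_of_eq hCjj'.symm) hCii' (by rw [hCjj']; positivity)
      · refine dsum_lt hnle i j ?_
        rw [if_pos h, if_pos h, mul_comm (C i i), mul_comm (C' i i)]
        exact sqrt_mul_scale_lt hεle hjpos (hnn i i)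
          (le_of_eq hCjj'.symm) hCii' (by rw [hCjj']; positivity)
    have hlt : hUnb C < hUnb C' := by
      rw [hUC, hUC', div_lt_div_iff₀ hDpos hD'pos]
      nlinarith [mul_pos hPpos (sub_pos.2 hG'lt)]
    rw [hmin1, hmin2]
    linarith
end

section
/- For every α > 0 and every non-degenerate normalized class adjacency matrix C of size m×m, if C' is the (m+1)×(m+1) matrix obtained from C by appending a row and a column of zeros (C'_{ij} = c_ij for i,j ≤ m and C'_{ij} = 0 otherwise), then h_unb^α(C') = h_unb^α(C) (empty class tolerance). -/
theorem Fin.sum_sum_ite_lt_eq_castSucc {M : Type*} [AddCommMonoid M] {m : ℕ}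
    (g : Fin (m + 1) → Fin (m + 1) → M) (hg : ∀ i, g i (Fin.last m) = 0) :
    (∑ i : Fin (m + 1), ∑ j : Fin (m + 1), if i < j then g i j else 0) =
      ∑ i : Fin m, ∑ j : Fin m, if i < j then g i.castSucc j.castSucc else 0 := by
  have hlast : ∀ j : Fin (m + 1), ¬ Fin.last m < j := fun j => not_lt.mpr (Fin.le_last j)
  rw [Fin.sum_univ_castSucc]
  simp only [hlast, if_false, Finset.sum_const_zero, add_zero]
  refine Finset.sum_congr rfl fun i _ => ?_
  rw [Fin.sum_univ_castSucc]
  simp only [hg, ite_self, add_zero, Fin.castSucc_lt_castSucc_iff]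

section Padding

variable {m : ℕ} {C : Matrix (Fin m) (Fin m) ℝ} {C' : Matrix (Fin (m + 1)) (Fin (m + 1)) ℝ}

theorem hUnb_eq_of_castSucc (hpad : ∀ i j : Fin m, C' i.castSucc j.castSucc = C i j)
    (hcol : ∀ i, C' i (Fin.last m) = 0) : hUnb C' = hUnb C := by
  unfold hUnb
  rw [Fin.sum_sum_ite_lt_eq_castSucc _ (by simp [hcol]),
    Fin.sum_sum_ite_lt_eq_castSucc _ (by simp [hcol])]
  simp only [hpad]

theorem sum_sqrt_diag_eq_of_castSucc (hpad : ∀ i j : Fin m, C' i.castSucc j.castSucc = C i j)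
    (hlast : C' (Fin.last m) (Fin.last m) = 0) :
    ∑ i, Real.sqrt (C' i i) = ∑ i, Real.sqrt (C i i) := by
  simp [Fin.sum_univ_castSucc, hpad, hlast]

end Padding

theorem empty_class_tolerance_general {m : ℕ} (α : ℝ)
    (C : Matrix (Fin m) (Fin m) ℝ)
    (C' : Matrix (Fin (m + 1)) (Fin (m + 1)) ℝ)
    (hpad : ∀ i j : Fin m, C' i.castSucc j.castSucc = C i j)
    (hzero : ∀ i j : Fin (m + 1), i = Fin.last m ∨ j = Fin.last m → C' i j = 0) :
    hUnbAlpha α C' = hUnbAlpha α C := by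
  have hcol : ∀ i, C' i (Fin.last m) = 0 := fun i => hzero i _ (Or.inr rfl)
  unfold hUnbAlpha
  rw [hUnb_eq_of_castSucc hpad hcol, sum_sqrt_diag_eq_of_castSucc hpad (hcol _)]

/-- empty class tolerance of h_unb^α. -/
theorem empty_class_tolerance {m : ℕ} (α : ℝ) (hα : 0 < α)
    (C : Matrix (Fin m) (Fin m) ℝ) (hC : IsNCAM C) (hnd : Nondeg C)
    (C' : Matrix (Fin (m + 1)) (Fin (m + 1)) ℝ)
    (hpad : ∀ i j : Fin m, C' i.castSucc j.castSucc = C i j)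
    (hzero : ∀ i j : Fin (m + 1), i = Fin.last m ∨ j = Fin.last m → C' i j = 0) :
    hUnbAlpha α C' = hUnbAlpha α C :=
  empty_class_tolerance_general α C C' hpad hzero
end

section
/- For every α > 0, the function C ↦ h_unb^α(C) is continuous on the set of non-degenerate normalized class adjacency matrices, i.e., on the set of m×m real matrices that are symmetric, have nonnegative entries, whose entries sum to 1, and which have at least two nonzero entries (continuity). -/
/-!
The unbiased homophily is a quotient of finite sums of continuous functions of the entries, so
only its denominator `D(C) = ∑_{i<j} (√(c_ii c_jj) + c_ij)` needs care. Its summands are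
nonnegative, so each one bounds `D(C)` from below; for a symmetric non-degenerate `C`, either some
off-diagonal `c_ij` or some product `c_ii c_jj` with `i ≠ j` is positive, hence `D(C) > 0`.
-/
open Finset

section Continuity

variable {X ι : Type*} [TopologicalSpace X] [Fintype ι] [LT ι] [DecidableLT ι]

theorem continuous_sum_sum_ite_lt {f : ι → ι → X → ℝ}
    (hf : ∀ i j, i < j → Continuous (f i j)) :
    Continuous fun x => ∑ i, ∑ j, if i < j then f i j x else 0 :=
  continuous_finsetSum _ fun i _ => continuous_finsetSum _ fun j _ =>
    continuous_if_const _ (hf i j) fun _ => continuous_const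

end Continuity

namespace Matrix

variable {m : ℕ}

noncomputable def hUnbNum (C : Matrix (Fin m) (Fin m) ℝ) : ℝ :=
  ∑ i : Fin m, ∑ j : Fin m, if i < j then Real.sqrt (C i i * C j j) - C i j else 0

noncomputable def hUnbDen (C : Matrix (Fin m) (Fin m) ℝ) : ℝ :=
  ∑ i : Fin m, ∑ j : Fin m, if i < j then Real.sqrt (C i i * C j j) + C i j else 0

theorem continuous_hUnbNum : Continuous (hUnbNum (m := m)) :=
  continuous_sum_sum_ite_lt fun i j _ =>
    (continuous_id.matrix_elem i i |>.mul <| continuous_id.matrix_elem j j).sqrt.sub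
      (continuous_id.matrix_elem i j)

theorem continuous_hUnbDen : Continuous (hUnbDen (m := m)) :=
  continuous_sum_sum_ite_lt fun i j _ =>
    (continuous_id.matrix_elem i i |>.mul <| continuous_id.matrix_elem j j).sqrt.add
      (continuous_id.matrix_elem i j)

section Nonneg

variable {C : Matrix (Fin m) (Fin m) ℝ} (hsymm : ∀ i j, C i j = C j i) (hnn : ∀ i j, 0 ≤ C i j)
include hnn

theorem sqrt_add_le_hUnbDen_of_lt {i j : Fin m} (hij : i < j) :
    Real.sqrt (C i i * C j j) + C i j ≤ hUnbDen C := by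
  have hterm : ∀ k l : Fin m, 0 ≤ if k < l then Real.sqrt (C k k * C l l) + C k l else 0 :=
    fun k l => by split_ifs <;> positivity [hnn k l]
  calc Real.sqrt (C i i * C j j) + C i j
      = if i < j then Real.sqrt (C i i * C j j) + C i j else 0 := (if_pos hij).symm
    _ ≤ ∑ l : Fin m, if i < l then Real.sqrt (C i i * C l l) + C i l else 0 :=
        single_le_sum (fun l _ => hterm i l) (mem_univ j)
    _ ≤ hUnbDen C :=
        single_le_sum (f := fun k => ∑ l : Fin m, _) (fun k _ => sum_nonneg fun l _ => hterm k l)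
          (mem_univ i)

include hsymm

theorem sqrt_add_le_hUnbDen_of_ne {i j : Fin m} (hij : i ≠ j) :
    Real.sqrt (C i i * C j j) + C i j ≤ hUnbDen C := by
  rcases hij.lt_or_gt with hlt | hgt
  · exact sqrt_add_le_hUnbDen_of_lt hnn hlt
  · rw [mul_comm, hsymm i j]
    exact sqrt_add_le_hUnbDen_of_lt hnn hgt

theorem hUnbDen_pos_of_ne {i j : Fin m} (hij : i ≠ j) (hC : C i j ≠ 0) : 0 < hUnbDen C :=
  calc 0 < C i j := (hnn i j).lt_of_ne' hC
    _ ≤ Real.sqrt (C i i * C j j) + C i j := le_add_of_nonneg_left (Real.sqrt_nonneg _)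
    _ ≤ hUnbDen C := sqrt_add_le_hUnbDen_of_ne hsymm hnn hij

theorem hUnbDen_pos_of_diag {i j : Fin m} (hij : i ≠ j) (hi : C i i ≠ 0) (hj : C j j ≠ 0) :
    0 < hUnbDen C :=
  calc 0 < Real.sqrt (C i i * C j j) :=
        Real.sqrt_pos.2 (mul_pos ((hnn i i).lt_of_ne' hi) ((hnn j j).lt_of_ne' hj))
    _ ≤ Real.sqrt (C i i * C j j) + C i j := le_add_of_nonneg_right (hnn i j)
    _ ≤ hUnbDen C := sqrt_add_le_hUnbDen_of_ne hsymm hnn hij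

end Nonneg

theorem hUnbDen_pos {C : Matrix (Fin m) (Fin m) ℝ} (hC : IsNCAM C) (hnd : Nondeg C) :
    0 < hUnbDen C := by
  obtain ⟨hsymm, hnn, -⟩ := hC
  obtain ⟨⟨a, b⟩, ⟨c, d⟩, hpq, hab, hcd⟩ := hnd
  by_cases hab' : a = b
  · by_cases hcd' : c = d
    · subst hab' hcd'
      exact hUnbDen_pos_of_diag hsymm hnn (by rintro rfl; exact hpq rfl) hab hcd
    · exact hUnbDen_pos_of_ne hsymm hnn hcd' hcd
  · exact hUnbDen_pos_of_ne hsymm hnn hab' hab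

end Matrix

theorem continuity_general {m : ℕ} (α : ℝ) :
    ContinuousOn (hUnbAlpha α)
      {C : Matrix (Fin m) (Fin m) ℝ | IsNCAM C ∧ Nondeg C} := by
  have hUnb_cont : ContinuousOn hUnb {C : Matrix (Fin m) (Fin m) ℝ | IsNCAM C ∧ Nondeg C} :=
    Matrix.continuous_hUnbNum.continuousOn.div Matrix.continuous_hUnbDen.continuousOn
      fun C hC => (Matrix.hUnbDen_pos hC.1 hC.2).ne'
  have hdiag_cont : Continuous fun C : Matrix (Fin m) (Fin m) ℝ =>
      α * min (∑ i : Fin m, Real.sqrt (C i i)) 1 :=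
    continuous_const.mul <| (continuous_finsetSum _ fun i _ =>
      (continuous_id.matrix_elem i i).sqrt).min continuous_const
  exact hUnb_cont.add hdiag_cont.continuousOn

/-- continuity of h_unb^α on the set of non-degenerate
normalized class adjacency matrices. -/
theorem continuity {m : ℕ} (α : ℝ) (hα : 0 < α) :
    ContinuousOn (hUnbAlpha α)
      {C : Matrix (Fin m) (Fin m) ℝ | IsNCAM C ∧ Nondeg C} :=
  continuity_general α
end

section
/- For every non-degenerate normalized class adjacency matrix C, h_unb(C) ≤ 1, and equality h_unb(C) = 1 holds if and only if ∑_i c_ii = 1 (maximal agreement for unbiased homophily with α = 0). -/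
/-- maximal agreement for unbiased homophily with α = 0. -/
theorem maximal_agreement_unb {m : ℕ}
    (C : Matrix (Fin m) (Fin m) ℝ) (hC : IsNCAM C) (hnd : Nondeg C) :
    hUnb C ≤ 1 ∧ (hUnb C = 1 ↔ ∑ i : Fin m, C i i = 1) := by
  obtain ⟨hsym, hnn, hsum⟩ := hC
  set S := ∑ i : Fin m, ∑ j : Fin m, if i < j then C i j else 0 with hS
  set T := ∑ i : Fin m, ∑ j : Fin m, if i < j then Real.sqrt (C i i * C j j) else 0 with hT
  have hSnn : 0 ≤ S :=
    Finset.sum_nonneg fun i _ => Finset.sum_nonneg fun j _ => by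
      split
      · exact hnn i j
      · exact le_refl 0
  have hTnn : 0 ≤ T :=
    Finset.sum_nonneg fun i _ => Finset.sum_nonneg fun j _ => by
      split
      · exact Real.sqrt_nonneg _
      · exact le_refl 0
  have hrepN : (∑ i : Fin m, ∑ j : Fin m,
      if i < j then Real.sqrt (C i i * C j j) - C i j else 0) = T - S := by
    rw [hT, hS, ← Finset.sum_sub_distrib]
    refine Finset.sum_congr rfl fun i _ => ?_
    rw [← Finset.sum_sub_distrib]
    refine Finset.sum_congr rfl fun j _ => ?_
    split <;> simp
  have hrepD : (∑ i : Fin m, ∑ j : Fin m,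
      if i < j then Real.sqrt (C i i * C j j) + C i j else 0) = T + S := by
    rw [hT, hS, ← Finset.sum_add_distrib]
    refine Finset.sum_congr rfl fun i _ => ?_
    rw [← Finset.sum_add_distrib]
    refine Finset.sum_congr rfl fun j _ => ?_
    split <;> simp
  have hrep : hUnb C = (T - S) / (T + S) := by
    rw [hUnb, hrepN, hrepD]
  -- key identity: trace + 2S = 1
  have hswap : (∑ i : Fin m, ∑ j : Fin m, if j < i then C i j else 0) = S := by
    rw [Finset.sum_comm, hS]
    refine Finset.sum_congr rfl fun i _ => Finset.sum_congr rfl fun j _ => ?_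
    split
    · rw [hsym]
    · rfl
  have hdiag : (∑ i : Fin m, ∑ j : Fin m, if i = j then C i j else 0)
      = ∑ i : Fin m, C i i := by
    refine Finset.sum_congr rfl fun i _ => ?_
    simp
  have key : (∑ i : Fin m, C i i) + 2 * S = 1 := by
    have htri : ∀ i j : Fin m, C i j =
        (if i < j then C i j else 0) + (if j < i then C i j else 0) +
          (if i = j then C i j else 0) := by
      intro i j
      rcases lt_trichotomy i j with h | h | h
      · simp [h, asymm h, h.ne]
      · simp [h]
      · simp [h, asymm h, h.ne']
    have : (∑ i : Fin m, ∑ j : Fin m, C i j)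
        = S + S + ∑ i : Fin m, C i i := by
      calc (∑ i : Fin m, ∑ j : Fin m, C i j)
          = ∑ i : Fin m, ∑ j : Fin m,
            ((if i < j then C i j else 0) + (if j < i then C i j else 0) +
              (if i = j then C i j else 0)) := by
            refine Finset.sum_congr rfl fun i _ => Finset.sum_congr rfl fun j _ => htri i j
        _ = S + S + ∑ i : Fin m, C i i := by
            simp only [Finset.sum_add_distrib]
            rw [hswap, hdiag]
    rw [this] at hsum
    linarith
  -- if S = 0 then all off-diagonal entries vanish and T > 0
  have hoff : S = 0 → ∀ i j : Fin m, i ≠ j → C i j = 0 := by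
    intro hS0 i j hij
    have h1 : ∀ i ∈ Finset.univ, (0:ℝ) ≤ ∑ j : Fin m, if i < j then C i j else 0 :=
      fun i _ => Finset.sum_nonneg fun j _ => by
        split
        · exact hnn i j
        · exact le_refl 0
    have h2 : ∀ a b : Fin m, a < b → C a b = 0 := by
      intro a b hab
      have hinner : (∑ j : Fin m, if a < j then C a j else 0) = 0 :=
        (Finset.sum_eq_zero_iff_of_nonneg h1).mp hS0 a (Finset.mem_univ a)
      have h3 : ∀ j ∈ Finset.univ, (0:ℝ) ≤ if a < j then C a j else 0 :=
        fun j _ => by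
          split
          · exact hnn a j
          · exact le_refl 0
      have := (Finset.sum_eq_zero_iff_of_nonneg h3).mp hinner b (Finset.mem_univ b)
      rwa [if_pos hab] at this
    rcases lt_or_gt_of_ne hij with h | h
    · exact h2 i j h
    · rw [hsym]; exact h2 j i h
  have hTpos : S = 0 → 0 < T := by
    intro hS0
    obtain ⟨p, q, hpq, hp, hq⟩ := hnd
    have hpd : p.1 = p.2 := by
      by_contra h
      exact hp (hoff hS0 p.1 p.2 h)
    have hqd : q.1 = q.2 := by
      by_contra h
      exact hq (hoff hS0 q.1 q.2 h)
    have hij : p.1 ≠ q.1 := by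
      intro h
      apply hpq
      exact Prod.ext h (by rw [← hpd, ← hqd, h])
    have hgen : ∀ a b : Fin m, a < b → C a a ≠ 0 → C b b ≠ 0 → 0 < T := by
      intro a b hab ha hb
      have hpos : 0 < Real.sqrt (C a a * C b b) :=
        Real.sqrt_pos.mpr (mul_pos ((hnn a a).lt_of_ne (Ne.symm ha))
          ((hnn b b).lt_of_ne (Ne.symm hb)))
      have step1 : Real.sqrt (C a a * C b b)
          ≤ ∑ j : Fin m, if a < j then Real.sqrt (C a a * C j j) else 0 := by
        have h := Finset.single_le_sum
          (f := fun j : Fin m => if a < j then Real.sqrt (C a a * C j j) else 0)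
          (fun j _ => by
            split
            · exact Real.sqrt_nonneg _
            · exact le_refl 0) (Finset.mem_univ b)
        simpa [hab] using h
      have step2 : (∑ j : Fin m, if a < j then Real.sqrt (C a a * C j j) else 0) ≤ T := by
        rw [hT]
        exact Finset.single_le_sum
          (f := fun i : Fin m => ∑ j : Fin m, if i < j then Real.sqrt (C i i * C j j) else 0)
          (fun i _ => Finset.sum_nonneg fun j _ => by
            split
            · exact Real.sqrt_nonneg _
            · exact le_refl 0) (Finset.mem_univ a)
      linarith
    rw [← hpd] at hp
    rw [← hqd] at hq
    rcases lt_or_gt_of_ne hij with h | h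
    · exact hgen p.1 q.1 h hp hq
    · exact hgen q.1 p.1 h hq hp
  constructor
  · rw [hrep]
    rcases eq_or_lt_of_le (by linarith : (0:ℝ) ≤ T + S) with h | h
    · rw [← h, div_zero]; norm_num
    · rw [div_le_one h]; linarith
  · constructor
    · intro h1
      rw [hrep] at h1
      have hDne : T + S ≠ 0 := by
        intro h0
        rw [h0, div_zero] at h1
        norm_num at h1
      have : T - S = T + S := by
        field_simp at h1
        linarith
      have hS0 : S = 0 := by linarith
      linarith
    · intro htr
      have hS0 : S = 0 := by linarith
      have hT0 : 0 < T := hTpos hS0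
      rw [hrep, hS0, sub_zero, add_zero, div_self (ne_of_gt hT0)]
end

section
/- For every non-degenerate normalized class adjacency matrix C: (a) if ∑_i c_ii = 0 then h_unb(C) = −1; and (b) if C has at least two nonzero diagonal entries, then h_unb(C) > −1 (minimal agreement for unbiased homophily with α = 0, outside the special case where at most one class has intra-edges). -/
/-- minimal agreement for unbiased homophily with α = 0,
outside the special case where at most one class has intra-edges. -/
theorem minimal_agreement_unb {m : ℕ}
    (C : Matrix (Fin m) (Fin m) ℝ) (hC : IsNCAM C) (hnd : Nondeg C) :
    ((∑ i : Fin m, C i i) = 0 → hUnb C = -1) ∧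
    ((∃ i j : Fin m, i ≠ j ∧ C i i ≠ 0 ∧ C j j ≠ 0) → hUnb C > -1) := by
  obtain ⟨hsym, hnn, hsum⟩ := hC
  set S : ℝ := ∑ i : Fin m, ∑ j : Fin m, if i < j then Real.sqrt (C i i * C j j) else 0 with hSdef
  set T : ℝ := ∑ i : Fin m, ∑ j : Fin m, if i < j then C i j else 0 with hTdef
  have hnum : (∑ i : Fin m, ∑ j : Fin m,
      if i < j then Real.sqrt (C i i * C j j) - C i j else 0) = S - T := by
    rw [hSdef, hTdef, ← Finset.sum_sub_distrib]
    refine Finset.sum_congr rfl fun i _ => ?_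
    rw [← Finset.sum_sub_distrib]
    refine Finset.sum_congr rfl fun j _ => ?_
    split <;> ring
  have hden : (∑ i : Fin m, ∑ j : Fin m,
      if i < j then Real.sqrt (C i i * C j j) + C i j else 0) = S + T := by
    rw [hSdef, hTdef, ← Finset.sum_add_distrib]
    refine Finset.sum_congr rfl fun i _ => ?_
    rw [← Finset.sum_add_distrib]
    refine Finset.sum_congr rfl fun j _ => ?_
    split <;> ring
  have hT0 : 0 ≤ T := by
    refine Finset.sum_nonneg fun i _ => Finset.sum_nonneg fun j _ => ?_
    split
    · exact hnn i j
    · exact le_refl 0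
  have hS0 : 0 ≤ S := by
    refine Finset.sum_nonneg fun i _ => Finset.sum_nonneg fun j _ => ?_
    split
    · exact Real.sqrt_nonneg _
    · exact le_refl 0
  -- key identity: diag sum + 2T = 1
  have htot : (∑ i : Fin m, C i i) + 2 * T = 1 := by
    have hsplit : ∀ i j : Fin m, C i j =
        (if i < j then C i j else 0) + (if j < i then C i j else 0) +
        (if i = j then C i j else 0) := by
      intro i j
      rcases lt_trichotomy i j with h | h | h
      · simp [h, not_lt.2 h.le, h.ne]
      · simp [h]
      · simp [h, not_lt.2 h.le, h.ne']
    have h1 : (∑ i : Fin m, ∑ j : Fin m, C i j) =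
        T + (∑ i : Fin m, ∑ j : Fin m, if j < i then C i j else 0) +
        (∑ i : Fin m, C i i) := by
      rw [hTdef, ← Finset.sum_add_distrib, ← Finset.sum_add_distrib]
      refine Finset.sum_congr rfl fun i _ => ?_
      calc ∑ j : Fin m, C i j
          = ∑ j : Fin m, ((if i < j then C i j else 0) + (if j < i then C i j else 0) +
              (if i = j then C i j else 0)) :=
            Finset.sum_congr rfl fun j _ => hsplit i j
        _ = _ := by rw [Finset.sum_add_distrib, Finset.sum_add_distrib]; simp
    have h2 : (∑ i : Fin m, ∑ j : Fin m, if j < i then C i j else 0) = T := by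
      rw [Finset.sum_comm, hTdef]
      refine Finset.sum_congr rfl fun j _ => Finset.sum_congr rfl fun i _ => ?_
      split <;> simp [hsym i j]
    rw [h1, h2] at hsum
    linarith
  constructor
  · intro hdiag
    have hdz : ∀ i : Fin m, C i i = 0 := by
      intro i
      have := (Finset.sum_eq_zero_iff_of_nonneg (fun i _ => hnn i i)).mp hdiag
      exact this i (Finset.mem_univ i)
    have hSz : S = 0 := by
      rw [hSdef]
      refine Finset.sum_eq_zero fun i _ => Finset.sum_eq_zero fun j _ => ?_
      simp [hdz i, hdz j]
    have hTv : T = 1 / 2 := by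
      rw [hdiag] at htot; linarith
    rw [hUnb, hnum, hden, hSz, hTv]
    norm_num
  · rintro ⟨i, j, hij, hi, hj⟩
    have hi' : 0 < C i i := lt_of_le_of_ne (hnn i i) (Ne.symm hi)
    have hj' : 0 < C j j := lt_of_le_of_ne (hnn j j) (Ne.symm hj)
    have hterm : 0 < Real.sqrt (C i i * C j j) :=
      Real.sqrt_pos.2 (mul_pos hi' hj')
    -- S ≥ the (min i j, max i j) term > 0
    have hSpos : 0 < S := by
      rcases hij.lt_or_gt with h | h
      · have hle : (∑ j' : Fin m, if i < j' then Real.sqrt (C i i * C j' j') else 0) ≤ S := by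
          rw [hSdef]
          refine Finset.single_le_sum (f := fun i' =>
            ∑ j' : Fin m, if i' < j' then Real.sqrt (C i' i' * C j' j') else 0)
            (fun i' _ => Finset.sum_nonneg fun j' _ => ?_) (Finset.mem_univ i)
          split
          · exact Real.sqrt_nonneg _
          · exact le_refl 0
        have hle2 : Real.sqrt (C i i * C j j) ≤
            (∑ j' : Fin m, if i < j' then Real.sqrt (C i i * C j' j') else 0) := by
          have := Finset.single_le_sum (f := fun j' =>
            if i < j' then Real.sqrt (C i i * C j' j') else 0)
            (fun j' _ => by split; exacts [Real.sqrt_nonneg _, le_refl 0]) (Finset.mem_univ j)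
          simpa [h] using this
        linarith
      · have hle : (∑ j' : Fin m, if j < j' then Real.sqrt (C j j * C j' j') else 0) ≤ S := by
          rw [hSdef]
          refine Finset.single_le_sum (f := fun i' =>
            ∑ j' : Fin m, if i' < j' then Real.sqrt (C i' i' * C j' j') else 0)
            (fun i' _ => Finset.sum_nonneg fun j' _ => ?_) (Finset.mem_univ j)
          split
          · exact Real.sqrt_nonneg _
          · exact le_refl 0
        have hle2 : Real.sqrt (C j j * C i i) ≤
            (∑ j' : Fin m, if j < j' then Real.sqrt (C j j * C j' j') else 0) := by
          have := Finset.single_le_sum (f := fun j' =>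
            if j < j' then Real.sqrt (C j j * C j' j') else 0)
            (fun j' _ => by split; exacts [Real.sqrt_nonneg _, le_refl 0]) (Finset.mem_univ i)
          simpa [h] using this
        have : 0 < Real.sqrt (C j j * C i i) := Real.sqrt_pos.2 (mul_pos hj' hi')
        linarith
    have hdpos : 0 < S + T := by linarith
    rw [hUnb, hnum, hden, gt_iff_lt, lt_div_iff₀ hdpos]
    linarith
end

section
/- Let C be a non-degenerate normalized class adjacency matrix with at least two nonzero diagonal entries, let i ≠ j be indices, and let ε satisfy 0 < ε ≤ 2(1+ε)·c_ij. Then h_unb((1+ε)·C − (ε/2)·E_ij − (ε/2)·E_ji) > h_unb(C) (hetero-monotonicity of h_unb outside the special case where at most one class has intra-edges). -/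
lemma indic_sum {m : ℕ} (a b : Fin m) (c : ℝ) :
    ∑ k : Fin m, ∑ l : Fin m, (if k < l then Matrix.single a b c k l else 0)
      = if a < b then c else 0 := by
  have h : ∀ k l : Fin m, (if k < l then Matrix.single a b c k l else 0)
      = if k = a then (if l = b then (if a < b then c else 0) else 0) else 0 := by
    intro k l
    by_cases hc : a = k ∧ b = l
    · obtain ⟨h1, h2⟩ := hc
      subst h1; subst h2
      simp [Matrix.single]
    · have h0 : Matrix.single a b c k l = 0 := by
        simp only [Matrix.single, Matrix.of_apply, if_neg hc]
      rw [h0]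
      have h1 : ¬(k = a ∧ l = b) := fun h => hc ⟨h.1.symm, h.2.symm⟩
      rcases not_and_or.mp h1 with h | h
      · simp [h]
      · simp [h]
  simp [h]

lemma sum_split_sub {m : ℕ} (f g : Fin m → Fin m → ℝ) :
    ∑ k : Fin m, ∑ l : Fin m, (if k < l then f k l - g k l else 0)
      = (∑ k : Fin m, ∑ l : Fin m, if k < l then f k l else 0)
        - (∑ k : Fin m, ∑ l : Fin m, if k < l then g k l else 0) := by
  rw [← Finset.sum_sub_distrib]
  refine Finset.sum_congr rfl fun k _ => ?_
  rw [← Finset.sum_sub_distrib]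
  refine Finset.sum_congr rfl fun l _ => ?_
  split <;> simp

lemma sum_split_add {m : ℕ} (f g : Fin m → Fin m → ℝ) :
    ∑ k : Fin m, ∑ l : Fin m, (if k < l then f k l + g k l else 0)
      = (∑ k : Fin m, ∑ l : Fin m, if k < l then f k l else 0)
        + (∑ k : Fin m, ∑ l : Fin m, if k < l then g k l else 0) := by
  rw [← Finset.sum_add_distrib]
  refine Finset.sum_congr rfl fun k _ => ?_
  rw [← Finset.sum_add_distrib]
  refine Finset.sum_congr rfl fun l _ => ?_
  split <;> simp

lemma main_aux {m : ℕ} (C : Matrix (Fin m) (Fin m) ℝ) (hC : IsNCAM C)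
    (hdiag : ∃ k l : Fin m, k ≠ l ∧ C k k ≠ 0 ∧ C l l ≠ 0)
    (a b : Fin m) (hab : a < b)
    (ε : ℝ) (hε0 : 0 < ε) (hε1 : ε ≤ 2 * (1 + ε) * C a b) :
    hUnb ((1 + ε) • C - (ε / 2) • Matrix.single a b (1 : ℝ)
      - (ε / 2) • Matrix.single b a (1 : ℝ)) > hUnb C := by
  obtain ⟨hsymm, hnn, -⟩ := hC
  have hε' : (0:ℝ) < 1 + ε := by linarith
  set C' := (1 + ε) • C - (ε / 2) • Matrix.single a b (1 : ℝ)
      - (ε / 2) • Matrix.single b a (1 : ℝ) with hC'def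
  set S := ∑ k : Fin m, ∑ l : Fin m, (if k < l then Real.sqrt (C k k * C l l) else 0) with hSdef
  set D := ∑ k : Fin m, ∑ l : Fin m, (if k < l then C k l else 0) with hDdef
  have hterm_nonneg : ∀ k l : Fin m, 0 ≤ (if k < l then Real.sqrt (C k k * C l l) else 0) := by
    intro k l; split
    · exact Real.sqrt_nonneg _
    · exact le_refl 0
  -- S > 0
  have hSpos : 0 < S := by
    obtain ⟨p, q, hpq, hp, hq⟩ := hdiag
    have hp' : 0 < C p p := lt_of_le_of_ne (hnn p p) (Ne.symm hp)
    have hq' : 0 < C q q := lt_of_le_of_ne (hnn q q) (Ne.symm hq)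
    have key : ∀ u v : Fin m, u < v → 0 < C u u → 0 < C v v → 0 < S := by
      intro u v huv hu hv
      refine Finset.sum_pos' (fun k _ => Finset.sum_nonneg fun l _ => hterm_nonneg k l)
        ⟨u, Finset.mem_univ u, Finset.sum_pos' (fun l _ => hterm_nonneg u l)
          ⟨v, Finset.mem_univ v, ?_⟩⟩
      rw [if_pos huv]
      exact Real.sqrt_pos.2 (mul_pos hu hv)
    rcases hpq.lt_or_gt with h | h
    · exact key p q h hp' hq'
    · exact key q p h hq' hp'
  have hDterm_nonneg : ∀ k l : Fin m, 0 ≤ (if k < l then C k l else 0) := by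
    intro k l; split
    · exact hnn k l
    · exact le_refl 0
  have hDnn : 0 ≤ D :=
    Finset.sum_nonneg fun k _ => Finset.sum_nonneg fun l _ => hDterm_nonneg k l
  have hCab_le_D : C a b ≤ D := by
    have h1 : C a b ≤ ∑ l : Fin m, (if a < l then C a l else 0) := by
      have := Finset.single_le_sum (f := fun l => if a < l then C a l else 0)
        (fun l _ => hDterm_nonneg a l) (Finset.mem_univ b)
      simpa only [if_pos hab] using this
    refine h1.trans ?_
    exact Finset.single_le_sum (f := fun k => ∑ l : Fin m, (if k < l then C k l else 0))
      (fun k _ => Finset.sum_nonneg fun l _ => hDterm_nonneg k l) (Finset.mem_univ a)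
  -- entries of C'
  have hC'diag : ∀ k : Fin m, C' k k = (1 + ε) * C k k := by
    intro k
    have h1 : ¬(a = k ∧ b = k) := fun h => hab.ne (h.1.trans h.2.symm)
    have h2 : ¬(b = k ∧ a = k) := fun h => hab.ne (h.2.trans h.1.symm)
    simp [hC'def, Matrix.sub_apply, Matrix.smul_apply, Matrix.single, Matrix.of_apply,
      h1, h2]
  -- S for C'
  have hS' : (∑ k : Fin m, ∑ l : Fin m, (if k < l then Real.sqrt (C' k k * C' l l) else 0))
      = (1 + ε) * S := by
    rw [hSdef, Finset.mul_sum]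
    refine Finset.sum_congr rfl fun k _ => ?_
    rw [Finset.mul_sum]
    refine Finset.sum_congr rfl fun l _ => ?_
    split
    · rw [hC'diag, hC'diag,
        show (1 + ε) * C k k * ((1 + ε) * C l l) = (1 + ε) ^ 2 * (C k k * C l l) by ring,
        Real.sqrt_mul (sq_nonneg _), Real.sqrt_sq hε'.le]
    · simp
  -- D for C'
  have hC'entry : ∀ k l : Fin m, C' k l
      = (1 + ε) * C k l - Matrix.single a b (ε / 2) k l
        - Matrix.single b a (ε / 2) k l := by
    intro k l
    simp only [hC'def, Matrix.sub_apply, Matrix.smul_apply, smul_eq_mul,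
      Matrix.single, Matrix.of_apply, mul_ite, mul_one, mul_zero]
  have hD' : (∑ k : Fin m, ∑ l : Fin m, (if k < l then C' k l else 0))
      = (1 + ε) * D - ε / 2 := by
    have e1 : (∑ k : Fin m, ∑ l : Fin m, (if k < l then C' k l else 0))
        = (∑ k : Fin m, ∑ l : Fin m,
            (if k < l then (1 + ε) * C k l - Matrix.single a b (ε / 2) k l else 0))
          - (∑ k : Fin m, ∑ l : Fin m,
              (if k < l then Matrix.single b a (ε / 2) k l else 0)) := by
      rw [← sum_split_sub (fun k l => (1 + ε) * C k l - Matrix.single a b (ε / 2) k l)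
        (fun k l => Matrix.single b a (ε / 2) k l)]
      refine Finset.sum_congr rfl fun k _ => Finset.sum_congr rfl fun l _ => ?_
      rw [hC'entry]
    rw [e1, sum_split_sub (fun k l => (1 + ε) * C k l) (fun k l => Matrix.single a b (ε / 2) k l), indic_sum, indic_sum, if_pos hab, if_neg (asymm hab)]
    have e2 : (∑ k : Fin m, ∑ l : Fin m, (if k < l then (1 + ε) * C k l else 0))
        = (1 + ε) * D := by
      rw [hDdef, Finset.mul_sum]
      refine Finset.sum_congr rfl fun k _ => ?_
      rw [Finset.mul_sum]
      exact Finset.sum_congr rfl fun l _ => by split <;> simp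
    rw [e2]
    ring
  -- put it together
  have hnum : ∀ M : Matrix (Fin m) (Fin m) ℝ,
      (∑ k : Fin m, ∑ l : Fin m, (if k < l then Real.sqrt (M k k * M l l) - M k l else 0))
        = (∑ k : Fin m, ∑ l : Fin m, (if k < l then Real.sqrt (M k k * M l l) else 0))
          - (∑ k : Fin m, ∑ l : Fin m, (if k < l then M k l else 0)) :=
    fun M => sum_split_sub _ _
  have hden : ∀ M : Matrix (Fin m) (Fin m) ℝ,
      (∑ k : Fin m, ∑ l : Fin m, (if k < l then Real.sqrt (M k k * M l l) + M k l else 0))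
        = (∑ k : Fin m, ∑ l : Fin m, (if k < l then Real.sqrt (M k k * M l l) else 0))
          + (∑ k : Fin m, ∑ l : Fin m, (if k < l then M k l else 0)) :=
    fun M => sum_split_add _ _
  have hED : ε / 2 ≤ (1 + ε) * D := by
    have h1 : ε / 2 ≤ (1 + ε) * C a b := by linarith
    have h2 : (1 + ε) * C a b ≤ (1 + ε) * D :=
      mul_le_mul_of_nonneg_left hCab_le_D hε'.le
    linarith
  rw [hUnb, hUnb, hnum, hden, hnum, hden, hS', hD', ← hSdef, ← hDdef]
  have hden1 : 0 < S + D := by linarith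
  have hden2 : 0 < (1 + ε) * S + ((1 + ε) * D - ε / 2) := by
    have := mul_pos hε' hSpos
    linarith
  rw [gt_iff_lt, div_lt_div_iff₀ hden1 hden2]
  nlinarith [mul_pos hε0 hSpos]

/-- hetero-monotonicity of h_unb outside the special case
where at most one class has intra-edges. -/
theorem hetero_monotonicity_unb {m : ℕ}
    (C : Matrix (Fin m) (Fin m) ℝ) (hC : IsNCAM C) (hnd : Nondeg C)
    (hdiag : ∃ k l : Fin m, k ≠ l ∧ C k k ≠ 0 ∧ C l l ≠ 0)
    (i j : Fin m) (hij : i ≠ j)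
    (ε : ℝ) (hε0 : 0 < ε) (hε1 : ε ≤ 2 * (1 + ε) * C i j) :
    hUnb ((1 + ε) • C - (ε / 2) • Matrix.single i j (1 : ℝ)
      - (ε / 2) • Matrix.single j i (1 : ℝ)) > hUnb C := by
  rcases hij.lt_or_gt with h | h
  · exact main_aux C hC hdiag i j h ε hε0 hε1
  · rw [sub_right_comm]
    exact main_aux C hC hdiag j i h ε hε0 (by rw [← hC.1 i j]; exact hε1)
end

section
/- There is no triple (h, R_base, R_min), where h is a real-valued function defined on the set D of 4×4 real matrices with nonnegative entries summing to 1 and having at least two nonzero entries, such that both: (i) constant baseline: for every C ∈ D, h(rand(C)) = R_base; and (ii) minimal agreement: for every C ∈ D, h(C) ≥ R_min, with equality h(C) = R_min if and only if ∑_i c_ii = 0. In other words, for directed graphs, the constant baseline and minimal agreement properties contradict each other. -/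
/-- For directed graphs: nonnegative entries summing to 1, at least two nonzero entries. -/
def InD (C : Matrix (Fin 4) (Fin 4) ℝ) : Prop :=
  (∀ i j, 0 ≤ C i j) ∧ (∑ i : Fin 4, ∑ j : Fin 4, C i j = 1) ∧
  (∃ p q : Fin 4 × Fin 4, p ≠ q ∧ C p.1 p.2 ≠ 0 ∧ C q.1 q.2 ≠ 0)

/-- rand(C) for directed graphs: rand(C)_{ij} = a_i · b_j with a_i row sums, b_j column sums. -/
noncomputable def randD (C : Matrix (Fin 4) (Fin 4) ℝ) : Matrix (Fin 4) (Fin 4) ℝ :=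
  Matrix.of fun i j => (∑ k : Fin 4, C i k) * (∑ k : Fin 4, C k j)

noncomputable def C1 : Matrix (Fin 4) (Fin 4) ℝ :=
  fun i j => if i = j ∧ i.val ≤ 1 then 1/2 else 0

noncomputable def C2 : Matrix (Fin 4) (Fin 4) ℝ :=
  fun i j => if (i.val + 2 = j.val) then 1/2 else 0

lemma v0 : ((0:Fin 4):ℕ) = 0 := rfl
lemma v1 : ((1:Fin 4):ℕ) = 1 := rfl
lemma v2 : ((2:Fin 4):ℕ) = 2 := rfl
lemma v3 : ((3:Fin 4):ℕ) = 3 := rfl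

lemma hC1 : InD C1 := by
  refine ⟨?_, ?_, ⟨(0,0), (1,1), by decide, by norm_num [C1, Fin.ext_iff, v0, v1, v2, v3], by norm_num [C1, Fin.ext_iff, v0, v1, v2, v3]⟩⟩
  · intro i j; fin_cases i <;> fin_cases j <;> norm_num [C1, Fin.ext_iff, v0, v1, v2, v3]
  · simp [C1, Fin.sum_univ_four, v0, v1, v2, v3] <;> norm_num

lemma hC2 : InD C2 := by
  refine ⟨?_, ?_, ⟨(0,2), (1,3), by decide, by norm_num [C2, Fin.ext_iff, v0, v1, v2, v3], by norm_num [C2, Fin.ext_iff, v0, v1, v2, v3]⟩⟩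
  · intro i j; fin_cases i <;> fin_cases j <;> norm_num [C2, Fin.ext_iff, v0, v1, v2, v3]
  · simp [C2, Fin.sum_univ_four, v0, v1, v2, v3] <;> norm_num

lemma hR1 : InD (randD C1) := by
  refine ⟨?_, ?_, ⟨(0,0), (0,1), by decide, ?_, ?_⟩⟩
  · intro i j
    fin_cases i <;> fin_cases j <;> simp [randD, C1, Fin.sum_univ_four, v0, v1, v2, v3] <;> norm_num
  · simp [randD, C1, Fin.sum_univ_four, v0, v1, v2, v3] <;> norm_num
  · simp [randD, C1, Fin.sum_univ_four, v0, v1, v2, v3] <;> norm_num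
  · simp [randD, C1, Fin.sum_univ_four, v0, v1, v2, v3] <;> norm_num

lemma hR2 : InD (randD C2) := by
  refine ⟨?_, ?_, ⟨(0,2), (0,3), by decide, ?_, ?_⟩⟩
  · intro i j
    fin_cases i <;> fin_cases j <;> simp [randD, C2, Fin.sum_univ_four, v0, v1, v2, v3] <;> norm_num
  · simp [randD, C2, Fin.sum_univ_four, v0, v1, v2, v3] <;> norm_num
  · simp [randD, C2, Fin.sum_univ_four, v0, v1, v2, v3] <;> norm_num
  · simp [randD, C2, Fin.sum_univ_four, v0, v1, v2, v3] <;> norm_num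

lemma trR1 : ∑ i : Fin 4, (randD C1) i i ≠ 0 := by
  simp [randD, C1, Fin.sum_univ_four, v0, v1, v2, v3] <;> norm_num

lemma trR2 : ∑ i : Fin 4, (randD C2) i i = 0 := by
  simp [randD, C2, Fin.sum_univ_four, v0, v1, v2, v3]

/-- for directed graphs, constant baseline and minimal agreement
contradict each other. -/
theorem no_constant_baseline_and_minimal_agreement :
    ¬ ∃ (h : Matrix (Fin 4) (Fin 4) ℝ → ℝ) (Rbase Rmin : ℝ),
      (∀ C : Matrix (Fin 4) (Fin 4) ℝ, InD C → h (randD C) = Rbase) ∧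
      (∀ C : Matrix (Fin 4) (Fin 4) ℝ, InD C →
        (Rmin ≤ h C ∧ (h C = Rmin ↔ ∑ i : Fin 4, C i i = 0))) := by
  rintro ⟨h, Rbase, Rmin, hb, hm⟩
  have e2 : h (randD C2) = Rmin := (hm _ hR2).2.mpr trR2
  have b2 : h (randD C2) = Rbase := hb _ hC2
  have e1 : h (randD C1) ≠ Rmin := fun he => trR1 ((hm _ hR1).2.mp he)
  have b1 : h (randD C1) = Rbase := hb _ hC1
  exact e1 (b1.trans (b2 ▸ e2))
end

section
/- There is no pair (h, R_base), where h is a real-valued function defined on the set D of 4×4 real matrices with nonnegative entries summing to 1 and having at least two nonzero entries, such that both: (i) constant baseline: for every C ∈ D, h(rand(C)) = R_base; and (ii) hetero-monotonicity: for every C ∈ D with ∑_i c_ii > 0, all indices i ≠ j, and every ε with 0 < ε ≤ (1+ε)·c_ij, h((1+ε)·C − ε·E_ij) > h(C). In other words, for directed graphs, the constant baseline and hetero-monotonicity properties contradict each other. -/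
/-- Auxiliary counterexample matrix: e₀ (1/2, 1/2, 0, 0)ᵀ. -/
noncomputable def Cmat : Matrix (Fin 4) (Fin 4) ℝ :=
  Matrix.of fun i j => if i = 0 then (if j = 0 then 1/2 else if j = 1 then 1/2 else 0) else 0

/-- Auxiliary counterexample matrix: e₀ (3/4, 1/4, 0, 0)ᵀ. -/
noncomputable def Cmat' : Matrix (Fin 4) (Fin 4) ℝ :=
  Matrix.of fun i j => if i = 0 then (if j = 0 then 3/4 else if j = 1 then 1/4 else 0) else 0

lemma Cmat_sum : ∑ i : Fin 4, ∑ j : Fin 4, Cmat i j = 1 := by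
  norm_num [Cmat, Fin.sum_univ_four,
    (by decide : (1:Fin 4) ≠ 0), (by decide : (2:Fin 4) ≠ 0), (by decide : (3:Fin 4) ≠ 0),
    (by decide : (2:Fin 4) ≠ 1), (by decide : (3:Fin 4) ≠ 1)]

lemma Cmat'_sum : ∑ i : Fin 4, ∑ j : Fin 4, Cmat' i j = 1 := by
  norm_num [Cmat', Fin.sum_univ_four,
    (by decide : (1:Fin 4) ≠ 0), (by decide : (2:Fin 4) ≠ 0), (by decide : (3:Fin 4) ≠ 0),
    (by decide : (2:Fin 4) ≠ 1), (by decide : (3:Fin 4) ≠ 1)]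

lemma Cmat_InD : InD Cmat := by
  refine ⟨?_, Cmat_sum, ⟨(0,0), (0,1), by decide, by norm_num [Cmat], by norm_num [Cmat]⟩⟩
  intro i j; simp only [Cmat, Matrix.of_apply]; split_ifs <;> norm_num

lemma Cmat'_InD : InD Cmat' := by
  refine ⟨?_, Cmat'_sum, ⟨(0,0), (0,1), by decide, by norm_num [Cmat'], by norm_num [Cmat']⟩⟩
  intro i j; simp only [Cmat', Matrix.of_apply]; split_ifs <;> norm_num

lemma Cmat_rand : randD Cmat = Cmat := by
  ext i j
  fin_cases i <;> fin_cases j <;>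
    simp [randD, Cmat, Fin.sum_univ_four] <;> norm_num

lemma Cmat'_rand : randD Cmat' = Cmat' := by
  ext i j
  fin_cases i <;> fin_cases j <;>
    simp [randD, Cmat', Fin.sum_univ_four] <;> norm_num

lemma Cmat_perturb :
    (1 + (1/2 : ℝ)) • Cmat - (1/2 : ℝ) • Matrix.single (0 : Fin 4) (1 : Fin 4) (1 : ℝ)
      = Cmat' := by
  ext i j
  fin_cases i <;> fin_cases j <;>
    norm_num [Cmat, Cmat', Matrix.single_apply, Matrix.sub_apply,
      Matrix.smul_apply]

lemma Cmat_trace : (0 : ℝ) < ∑ i : Fin 4, Cmat i i := by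
  norm_num [Cmat, Fin.sum_univ_four,
    (by decide : (1:Fin 4) ≠ 0), (by decide : (2:Fin 4) ≠ 0), (by decide : (3:Fin 4) ≠ 0)]

/-- for directed graphs, constant baseline and hetero-monotonicity
contradict each other. -/
theorem no_constant_baseline_and_hetero_monotonicity :
    ¬ ∃ (h : Matrix (Fin 4) (Fin 4) ℝ → ℝ) (Rbase : ℝ),
      (∀ C : Matrix (Fin 4) (Fin 4) ℝ, InD C → h (randD C) = Rbase) ∧
      (∀ C : Matrix (Fin 4) (Fin 4) ℝ, InD C → 0 < ∑ i : Fin 4, C i i →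
        ∀ i j : Fin 4, i ≠ j → ∀ ε : ℝ, 0 < ε → ε ≤ (1 + ε) * C i j →
          h ((1 + ε) • C - ε • Matrix.single i j (1 : ℝ)) > h C) := by
  rintro ⟨h, Rbase, hbase, hmono⟩
  have hlt := hmono Cmat Cmat_InD Cmat_trace 0 1 (by decide) (1/2) (by norm_num)
    (by norm_num [Cmat])
  rw [Cmat_perturb] at hlt
  have h1 : h Cmat' = Rbase := by rw [← Cmat'_rand]; exact hbase Cmat' Cmat'_InD
  have h2 : h Cmat = Rbase := by rw [← Cmat_rand]; exact hbase Cmat Cmat_InD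
  rw [h1, h2] at hlt
  exact lt_irrefl _ hlt
end

section
/- Adjusted nominal assortativity does not satisfy constant baseline: with m = 3 classes of equal sizes (f_i = 1/3 for all i), there exist two 3×3 normalized class adjacency matrices C and C′, each satisfying C = rand(C) and C′ = rand(C′), such that AC_adj(C) ≠ AC_adj(C′). (For example, take C = rand of the matrix with row sums a = (1/2, 1/4, 1/4) and C′ = rand of the matrix with row sums a = (1/3, 1/3, 1/3).) -/
/-- A normalized class adjacency matrix: symmetric, nonnegative entries, entries sum to 1. -/
def IsNCAM3 (C : Matrix (Fin 3) (Fin 3) ℝ) : Prop :=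
  (∀ i j, C i j = C j i) ∧ (∀ i j, 0 ≤ C i j) ∧ (∑ i : Fin 3, ∑ j : Fin 3, C i j = 1)

/-- rand(C): rand(C)_{ij} = a_i · a_j where a_i is the i-th row sum. -/
noncomputable def randM3 (C : Matrix (Fin 3) (Fin 3) ℝ) : Matrix (Fin 3) (Fin 3) ℝ :=
  Matrix.of fun i j => (∑ k : Fin 3, C i k) * (∑ k : Fin 3, C j k)

/-- Adjusted nominal assortativity for m = 3 equal-size classes (f_i = 1/3). -/
noncomputable def ACadj3 (C : Matrix (Fin 3) (Fin 3) ℝ) : ℝ :=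
  ((∑ i : Fin 3, (9 : ℝ) * C i i) - ∑ i : Fin 3, ((9 : ℝ) * ∑ k : Fin 3, C i k) ^ 2) /
    (1 - ∑ i : Fin 3, ((9 : ℝ) * ∑ k : Fin 3, C i k) ^ 2)

/-- adjusted nominal assortativity does not satisfy constant baseline. -/
theorem adjusted_nominal_assortativity_no_constant_baseline :
    ∃ C C' : Matrix (Fin 3) (Fin 3) ℝ,
      IsNCAM3 C ∧ IsNCAM3 C' ∧ C = randM3 C ∧ C' = randM3 C' ∧
      (1 - ∑ i : Fin 3, ((9 : ℝ) * ∑ k : Fin 3, C i k) ^ 2) ≠ 0 ∧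
      (1 - ∑ i : Fin 3, ((9 : ℝ) * ∑ k : Fin 3, C' i k) ^ 2) ≠ 0 ∧
      ACadj3 C ≠ ACadj3 C' := by
  refine ⟨!![1/4, 1/8, 1/8; 1/8, 1/16, 1/16; 1/8, 1/16, 1/16],
    !![1/9, 1/9, 1/9; 1/9, 1/9, 1/9; 1/9, 1/9, 1/9], ?_, ?_, ?_, ?_, ?_, ?_, ?_⟩
  · refine ⟨?_, ?_, ?_⟩
    · intro i j; fin_cases i <;> fin_cases j <;> norm_num
    · intro i j; fin_cases i <;> fin_cases j <;> norm_num
    · norm_num [Fin.sum_univ_three, Matrix.vecHead, Matrix.vecTail, Matrix.cons_val_two]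
  · refine ⟨?_, ?_, ?_⟩
    · intro i j; fin_cases i <;> fin_cases j <;> norm_num
    · intro i j; fin_cases i <;> fin_cases j <;> norm_num
    · norm_num [Fin.sum_univ_three, Matrix.vecHead, Matrix.vecTail, Matrix.cons_val_two]
  · ext i j; fin_cases i <;> fin_cases j <;>
      norm_num [randM3, Fin.sum_univ_three, Matrix.vecHead, Matrix.vecTail, Matrix.cons_val_two]
  · ext i j; fin_cases i <;> fin_cases j <;>
      norm_num [randM3, Fin.sum_univ_three, Matrix.vecHead, Matrix.vecTail, Matrix.cons_val_two]
  · norm_num [Fin.sum_univ_three, Matrix.vecHead, Matrix.vecTail, Matrix.cons_val_two]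
  · norm_num [Fin.sum_univ_three, Matrix.vecHead, Matrix.vecTail, Matrix.cons_val_two]
  · norm_num [ACadj3, Fin.sum_univ_three, Matrix.vecHead, Matrix.vecTail, Matrix.cons_val_two]
end

section
/- Adjusted nominal assortativity does not satisfy minimal agreement: with m = 3 classes of equal sizes (f_i = 1/3 for all i), there exist two fully heterophilic 3×3 normalized class adjacency matrices C and C′ (i.e., with ∑_i c_ii = 0 and ∑_i c′_ii = 0) such that AC_adj(C) ≠ AC_adj(C′). (For example, take C with c_12 = c_21 = 1/2 and all other entries 0, and C′ with all six off-diagonal entries equal to 1/6.) -/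
open Matrix

noncomputable def chanceAgreement3 (C : Matrix (Fin 3) (Fin 3) ℝ) : ℝ :=
  ∑ i : Fin 3, ((9 : ℝ) * ∑ k : Fin 3, C i k) ^ 2

theorem ACadj3_eq_of_diag_sum_eq_zero {C : Matrix (Fin 3) (Fin 3) ℝ}
    (hdiag : ∑ i : Fin 3, C i i = 0) :
    ACadj3 C = chanceAgreement3 C / (chanceAgreement3 C - 1) := by
  rw [ACadj3, ← Finset.mul_sum, hdiag, mul_zero, zero_sub, ← neg_sub, neg_div_neg_eq]
  rfl

theorem injOn_div_sub_one : Set.InjOn (fun s : ℝ => s / (s - 1)) {1}ᶜ := by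
  intro s hs t ht hst
  have hs' : s - 1 ≠ 0 := sub_ne_zero.mpr hs
  have ht' : t - 1 ≠ 0 := sub_ne_zero.mpr ht
  rw [div_eq_div_iff hs' ht'] at hst
  linarith

theorem ACadj3_ne_of_chanceAgreement3_ne {C C' : Matrix (Fin 3) (Fin 3) ℝ}
    (hdiag : ∑ i : Fin 3, C i i = 0) (hdiag' : ∑ i : Fin 3, C' i i = 0)
    (hs : chanceAgreement3 C ≠ 1) (hs' : chanceAgreement3 C' ≠ 1)
    (hne : chanceAgreement3 C ≠ chanceAgreement3 C') :
    ACadj3 C ≠ ACadj3 C' := by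
  rw [ACadj3_eq_of_diag_sum_eq_zero hdiag, ACadj3_eq_of_diag_sum_eq_zero hdiag']
  exact fun h => hne (injOn_div_sub_one hs hs' h)

noncomputable def singleEdgeClassMatrix : Matrix (Fin 3) (Fin 3) ℝ :=
  !![0, 1/2, 0; 1/2, 0, 0; 0, 0, 0]

noncomputable def uniformHeterophilicClassMatrix : Matrix (Fin 3) (Fin 3) ℝ :=
  !![0, 1/6, 1/6; 1/6, 0, 1/6; 1/6, 1/6, 0]

theorem isNCAM3_singleEdgeClassMatrix : IsNCAM3 singleEdgeClassMatrix := by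
  refine ⟨fun i j => ?_, fun i j => ?_, ?_⟩
  · fin_cases i <;> fin_cases j <;> rfl
  · fin_cases i <;> fin_cases j <;> norm_num [singleEdgeClassMatrix]
  · norm_num [singleEdgeClassMatrix, Fin.sum_univ_succ]

theorem isNCAM3_uniformHeterophilicClassMatrix : IsNCAM3 uniformHeterophilicClassMatrix := by
  refine ⟨fun i j => ?_, fun i j => ?_, ?_⟩
  · fin_cases i <;> fin_cases j <;> rfl
  · fin_cases i <;> fin_cases j <;> norm_num [uniformHeterophilicClassMatrix]
  · norm_num [uniformHeterophilicClassMatrix, Fin.sum_univ_succ]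

theorem diag_sum_singleEdgeClassMatrix : ∑ i : Fin 3, singleEdgeClassMatrix i i = 0 := by
  simp [singleEdgeClassMatrix, Fin.sum_univ_succ]

theorem diag_sum_uniformHeterophilicClassMatrix :
    ∑ i : Fin 3, uniformHeterophilicClassMatrix i i = 0 := by
  simp [uniformHeterophilicClassMatrix, Fin.sum_univ_succ]

theorem chanceAgreement3_singleEdgeClassMatrix :
    chanceAgreement3 singleEdgeClassMatrix = 81 / 2 := by
  norm_num [chanceAgreement3, singleEdgeClassMatrix, Fin.sum_univ_succ]

theorem chanceAgreement3_uniformHeterophilicClassMatrix :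
    chanceAgreement3 uniformHeterophilicClassMatrix = 27 := by
  norm_num [chanceAgreement3, uniformHeterophilicClassMatrix, Fin.sum_univ_succ]

/-- adjusted nominal assortativity does not satisfy minimal agreement. -/
theorem adjusted_nominal_assortativity_no_minimal_agreement :
    ∃ C C' : Matrix (Fin 3) (Fin 3) ℝ,
      IsNCAM3 C ∧ IsNCAM3 C' ∧
      (∑ i : Fin 3, C i i = 0) ∧ (∑ i : Fin 3, C' i i = 0) ∧
      (1 - ∑ i : Fin 3, ((9 : ℝ) * ∑ k : Fin 3, C i k) ^ 2) ≠ 0 ∧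
      (1 - ∑ i : Fin 3, ((9 : ℝ) * ∑ k : Fin 3, C' i k) ^ 2) ≠ 0 ∧
      ACadj3 C ≠ ACadj3 C' := by
  have hs := chanceAgreement3_singleEdgeClassMatrix
  have hs' := chanceAgreement3_uniformHeterophilicClassMatrix
  refine ⟨singleEdgeClassMatrix, uniformHeterophilicClassMatrix,
    isNCAM3_singleEdgeClassMatrix, isNCAM3_uniformHeterophilicClassMatrix,
    diag_sum_singleEdgeClassMatrix, diag_sum_uniformHeterophilicClassMatrix, ?_, ?_, ?_⟩
  · change 1 - chanceAgreement3 _ ≠ 0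
    norm_num [hs]
  · change 1 - chanceAgreement3 _ ≠ 0
    norm_num [hs']
  · refine ACadj3_ne_of_chanceAgreement3_ne diag_sum_singleEdgeClassMatrix
      diag_sum_uniformHeterophilicClassMatrix ?_ ?_ ?_ <;> norm_num [hs, hs']
end
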